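/- arXiv:2205.07608 — 6 statements merged into one kernel-verified Lean document; each statement's English description precedes it below -/
import Mathlib

section
/- Let V, W ⊆ X be subspaces with V ∩ W = {0}, let M be a nonzero element of the subalgebra of ⋀X generated by V, let N be a nonzero element of the subalgebra of ⋀X generated by W, and let v ∈ X. Then v⌟(M∧N) = 0 if and only if v⌟M = 0 and v⌟N = 0. -/
open scoped RealInnerProductSpace

/-- The blade `v₁ ∧ ⋯ ∧ v_k` in the exterior algebra. -/
noncomputable def expBlade {X : Type*} [AddCommGroup X] [Module ℝ X] {k : ℕ}
    (v : Fin k → X) : ExteriorAlgebra ℝ X :=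
  (List.ofFn fun i => ExteriorAlgebra.ι ℝ (v i)).prod

/-!
Contraction by a vector of `Wᗮ` is a derivation that kills `⋀W`, so on `x ∧ N` with `N ∈ ⋀W` it
acts on `x` alone. Since `V ∩ W = 0`, vectors of `Wᗮ` can contract any nonzero element of `⋀V`
down to a nonzero scalar: an element of `⋀V` killed by all of them is a scalar, because the Euler
operator `∑ fᵢ ∧ (uᵢ⌟ ·)`, built from a basis `fᵢ` of `V` and a dual family `uᵢ ∈ Wᗮ`, multiplies
products of `k` vectors of `V` by `k`. Consequently `a ∧ N ≠ 0` for nonzero `a ∈ ⋀V`, `N ∈ ⋀W`,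
and `b ∈ ⋀V` with `b ∧ N ∈ ⋀W` is a scalar.

If `v⌟(M∧N) = (v⌟M)∧N + M̂∧(v⌟N)` vanishes, contracting `M̂` to a nonzero scalar gives
`v⌟N = b ∧ N` with `b ∈ ⋀V`, so `v⌟N = c N`; since contraction lowers degree, `c = 0`.
Then `(v⌟M) ∧ N = 0` forces `v⌟M = 0`.
-/

section Filtration

open ExteriorAlgebra

variable {R M : Type*} [CommRing R] [AddCommGroup M] [Module R M]

abbrev exteriorVectors (S : Submodule R M) : Submodule R (ExteriorAlgebra R M) := S.map (ι R)

abbrev exteriorSubalgebra (S : Submodule R M) : Subalgebra R (ExteriorAlgebra R M) :=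
  Algebra.adjoin R (ι R '' (S : Set M))

theorem ι_mul_mem_exteriorVectors_pow {S : Submodule R M} {w : M} (hw : w ∈ S) {k : ℕ}
    {y : ExteriorAlgebra R M} (hy : y ∈ exteriorVectors S ^ k) :
    ι R w * y ∈ exteriorVectors S ^ (k + 1) := by
  rw [pow_succ']
  exact Submodule.mul_mem_mul (Submodule.mem_map_of_mem hw) hy

theorem mem_iSup_exteriorVectors_pow {S : Submodule R M} {x : ExteriorAlgebra R M}
    (hx : x ∈ exteriorSubalgebra S) : x ∈ ⨆ k, exteriorVectors S ^ k := by
  rw [← Subalgebra.mem_toSubmodule] at hx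
  revert x
  rw [← SetLike.le_def, Algebra.adjoin_toSubmodule_le]
  intro x hx
  induction hx using Submonoid.closure_induction_left with
  | one => exact Submodule.mem_iSup_of_mem 0 (by simp)
  | mul_left a ha y _ ih =>
    obtain ⟨w, hw, rfl⟩ := ha
    refine Submodule.iSup_induction _ (motive := fun y => ι R w * y ∈ _) ih
      (fun k y hy => Submodule.mem_iSup_of_mem (k + 1) (ι_mul_mem_exteriorVectors_pow hw hy))
      (by simp) (fun y z hy hz => by rw [mul_add]; exact add_mem hy hz)

def degreeLE (S : Submodule R M) (n : ℕ) : Submodule R (ExteriorAlgebra R M) :=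
  ⨆ k ≤ n, exteriorVectors S ^ k

theorem degreeLE_mono (S : Submodule R M) : Monotone (degreeLE S) :=
  fun _ _ hnm => biSup_mono fun _ hk => hk.trans hnm

theorem pow_le_degreeLE (S : Submodule R M) {k n : ℕ} (hkn : k ≤ n) :
    exteriorVectors S ^ k ≤ degreeLE S n :=
  le_biSup (fun k => exteriorVectors S ^ k) hkn

theorem exists_mem_degreeLE {S : Submodule R M} {x : ExteriorAlgebra R M}
    (hx : x ∈ exteriorSubalgebra S) : ∃ n, x ∈ degreeLE S n := by
  refine Submodule.iSup_induction _ (motive := fun y => ∃ n, y ∈ degreeLE S n)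
    (mem_iSup_exteriorVectors_pow hx)
    (fun k y hy => ⟨k, pow_le_degreeLE S le_rfl hy⟩)
    ⟨0, zero_mem _⟩ ?_
  rintro y z ⟨n, hy⟩ ⟨m, hz⟩
  exact ⟨max n m, add_mem (degreeLE_mono S (le_max_left n m) hy)
    (degreeLE_mono S (le_max_right n m) hz)⟩

theorem degreeLE_zero (S : Submodule R M) : degreeLE S 0 = 1 := by
  simp [degreeLE]

end Filtration

section Contraction

open ExteriorAlgebra

variable {X : Type*} [NormedAddCommGroup X] [InnerProductSpace ℝ X]

structure IsLeftContraction (ginv : ExteriorAlgebra ℝ X →ₐ[ℝ] ExteriorAlgebra ℝ X)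
    (lc : X → ExteriorAlgebra ℝ X →ₗ[ℝ] ExteriorAlgebra ℝ X) : Prop where
  ginv_ι : ∀ v : X, ginv (ι ℝ v) = -ι ℝ v
  lc_one : ∀ v : X, lc v 1 = 0
  lc_ι : ∀ v w : X, lc v (ι ℝ w) = algebraMap ℝ (ExteriorAlgebra ℝ X) ⟪v, w⟫
  lc_mul : ∀ (v : X) (M N : ExteriorAlgebra ℝ X), lc v (M * N) = lc v M * N + ginv M * lc v N

theorem exists_mem_orthogonal_inner_eq [FiniteDimensional ℝ X] {V W : Submodule ℝ X}
    (hVW : V ⊓ W = ⊥) (x : X) : ∃ u ∈ Vᗮ, ∀ w ∈ W, ⟪u, w⟫ = ⟪x, w⟫ := by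
  have hsup : Vᗮ ⊔ Wᗮ = ⊤ := by
    rw [← Submodule.orthogonal_eq_bot_iff, ← Submodule.inf_orthogonal,
      Submodule.orthogonal_orthogonal, Submodule.orthogonal_orthogonal, hVW]
  obtain ⟨u, hu, z, hz, rfl⟩ := Submodule.mem_sup.mp (hsup ▸ Submodule.mem_top (x := x))
  refine ⟨u, hu, fun w hw => ?_⟩
  rw [inner_add_left, Submodule.inner_left_of_mem_orthogonal hw hz, add_zero]

/-- When `∑ i, ⟪u i, w⟫ • f i = w` for all `w ∈ W`, this operator multiplies every product of `k`
vectors of `W` by `k`. -/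
def eulerOperator (lc : X → ExteriorAlgebra ℝ X →ₗ[ℝ] ExteriorAlgebra ℝ X) {κ : Type*}
    [Fintype κ] (f u : κ → X) : Module.End ℝ (ExteriorAlgebra ℝ X) :=
  ∑ i, LinearMap.mulLeft ℝ (ι ℝ (f i)) ∘ₗ lc (u i)

theorem eulerOperator_apply (lc : X → ExteriorAlgebra ℝ X →ₗ[ℝ] ExteriorAlgebra ℝ X)
    {κ : Type*} [Fintype κ] (f u : κ → X) (y : ExteriorAlgebra ℝ X) :
    eulerOperator lc f u y = ∑ i, ι ℝ (f i) * lc (u i) y := by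
  simp [eulerOperator]

def contractions (lc : X → ExteriorAlgebra ℝ X →ₗ[ℝ] ExteriorAlgebra ℝ X) (K : Submodule ℝ X) :
    Submonoid (Module.End ℝ (ExteriorAlgebra ℝ X)) :=
  Submonoid.closure (lc '' K)

namespace IsLeftContraction

variable {ginv : ExteriorAlgebra ℝ X →ₐ[ℝ] ExteriorAlgebra ℝ X}
  {lc : X → ExteriorAlgebra ℝ X →ₗ[ℝ] ExteriorAlgebra ℝ X}

theorem ginv_involutive (h : IsLeftContraction ginv lc) : Function.Involutive ginv := by
  have hcomp : ginv.comp ginv = AlgHom.id ℝ (ExteriorAlgebra ℝ X) := by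
    ext v
    simp [h.ginv_ι]
  exact fun x => congrArg (· x) hcomp

theorem lc_algebraMap (h : IsLeftContraction ginv lc) (u : X) (r : ℝ) :
    lc u (algebraMap ℝ (ExteriorAlgebra ℝ X) r) = 0 := by
  rw [Algebra.algebraMap_eq_smul_one, map_smul, h.lc_one, smul_zero]

theorem lc_eq_zero_of_mem_one (h : IsLeftContraction ginv lc) (u : X) {x : ExteriorAlgebra ℝ X}
    (hx : x ∈ (1 : Submodule ℝ (ExteriorAlgebra ℝ X))) : lc u x = 0 := by
  obtain ⟨r, rfl⟩ := Submodule.mem_one.mp hx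
  exact h.lc_algebraMap u r

theorem lc_ι_mul (h : IsLeftContraction ginv lc) (u w : X) (y : ExteriorAlgebra ℝ X) :
    lc u (ι ℝ w * y) = ⟪u, w⟫ • y - ι ℝ w * lc u y := by
  rw [h.lc_mul, h.lc_ι, h.ginv_ι, ← Algebra.smul_def, neg_mul, sub_eq_add_neg]

theorem lc_mem_pow (h : IsLeftContraction ginv lc) {S : Submodule ℝ X} (u : X) (k : ℕ)
    {x : ExteriorAlgebra ℝ X} (hx : x ∈ exteriorVectors S ^ (k + 1)) :
    lc u x ∈ exteriorVectors S ^ k := by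
  induction k generalizing x with
  | zero =>
    obtain ⟨w, -, rfl⟩ := Submodule.mem_map.mp (pow_one (exteriorVectors S) ▸ hx)
    rw [h.lc_ι, pow_zero]
    exact Submodule.algebraMap_mem _
  | succ k ih =>
    rw [pow_succ'] at hx
    refine Submodule.mul_induction_on hx (fun p hp q hq => ?_)
      (fun y z hy hz => by rw [map_add]; exact add_mem hy hz)
    obtain ⟨w, hw, rfl⟩ := Submodule.mem_map.mp hp
    rw [h.lc_ι_mul]
    exact sub_mem (Submodule.smul_mem _ _ hq) (ι_mul_mem_exteriorVectors_pow hw (ih hq))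

theorem lc_mem_degreeLE (h : IsLeftContraction ginv lc) {S : Submodule ℝ X} (u : X) {n : ℕ}
    {x : ExteriorAlgebra ℝ X} (hx : x ∈ degreeLE S (n + 1)) : lc u x ∈ degreeLE S n := by
  suffices degreeLE S (n + 1) ≤ (degreeLE S n).comap (lc u) from this hx
  refine iSup₂_le fun k hk => ?_
  rcases k with _ | k
  · exact fun y hy => by simp [h.lc_eq_zero_of_mem_one u hy]
  · exact fun y hy => pow_le_degreeLE S (by omega) (h.lc_mem_pow u k hy)

theorem ginv_mem_exteriorSubalgebra (h : IsLeftContraction ginv lc) {S : Submodule ℝ X}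
    {x : ExteriorAlgebra ℝ X} (hx : x ∈ exteriorSubalgebra S) : ginv x ∈ exteriorSubalgebra S := by
  induction hx using Algebra.adjoin_induction with
  | mem y hy =>
    obtain ⟨w, hw, rfl⟩ := hy
    rw [h.ginv_ι]
    exact neg_mem (Algebra.subset_adjoin ⟨w, hw, rfl⟩)
  | algebraMap r => rw [AlgHom.commutes]; exact algebraMap_mem _ r
  | add a b _ _ ha hb => rw [map_add]; exact add_mem ha hb
  | mul a b _ _ ha hb => rw [map_mul]; exact mul_mem ha hb

theorem lc_mem_exteriorSubalgebra (h : IsLeftContraction ginv lc) {S : Submodule ℝ X} (u : X)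
    {x : ExteriorAlgebra ℝ X} (hx : x ∈ exteriorSubalgebra S) : lc u x ∈ exteriorSubalgebra S := by
  induction hx using Algebra.adjoin_induction with
  | mem y hy =>
    obtain ⟨w, hw, rfl⟩ := hy
    rw [h.lc_ι]
    exact algebraMap_mem _ _
  | algebraMap r => rw [h.lc_algebraMap]; exact zero_mem _
  | add a b _ _ ha hb => rw [map_add]; exact add_mem ha hb
  | mul a b hma hmb ha hb =>
    rw [h.lc_mul]
    exact add_mem (mul_mem ha hmb) (mul_mem (h.ginv_mem_exteriorSubalgebra hma) hb)

theorem lc_eq_zero_of_mem_orthogonal (h : IsLeftContraction ginv lc) {S : Submodule ℝ X} {u : X}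
    (hu : u ∈ Sᗮ) {x : ExteriorAlgebra ℝ X} (hx : x ∈ exteriorSubalgebra S) : lc u x = 0 := by
  induction hx using Algebra.adjoin_induction with
  | mem y hy =>
    obtain ⟨w, hw, rfl⟩ := hy
    rw [h.lc_ι, (Submodule.mem_orthogonal' S u).mp hu w hw, map_zero]
  | algebraMap r => exact h.lc_algebraMap u r
  | add a b _ _ ha hb => rw [map_add, ha, hb, add_zero]
  | mul a b _ _ ha hb => rw [h.lc_mul, ha, hb, zero_mul, mul_zero, add_zero]

theorem eq_zero_of_lc_eq_smul (h : IsLeftContraction ginv lc) {S : Submodule ℝ X} {v : X}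
    {r : ℝ} (hr : r ≠ 0) {x : ExteriorAlgebra ℝ X} (hx : x ∈ exteriorSubalgebra S)
    (hvx : lc v x = r • x) : x = 0 := by
  obtain ⟨n, hxn⟩ := exists_mem_degreeLE hx
  induction n generalizing x with
  | zero =>
    rw [degreeLE_zero] at hxn
    rw [h.lc_eq_zero_of_mem_one v hxn, eq_comm, smul_eq_zero] at hvx
    exact hvx.resolve_left hr
  | succ n ih =>
    have hlc : lc v x = 0 :=
      ih (h.lc_mem_exteriorSubalgebra v hx) (by rw [hvx, map_smul, hvx]) (h.lc_mem_degreeLE v hxn)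
    rw [hlc, eq_comm, smul_eq_zero] at hvx
    exact hvx.resolve_left hr

section Euler

variable {κ : Type*} [Fintype κ] {f u : κ → X}

theorem eulerOperator_ι_mul (h : IsLeftContraction ginv lc) {w : X}
    (hw : ∑ i, ⟪u i, w⟫ • f i = w) (y : ExteriorAlgebra ℝ X) :
    eulerOperator lc f u (ι ℝ w * y) = ι ℝ w * y + ι ℝ w * eulerOperator lc f u y := by
  have hscalar : ∑ i, ι ℝ (f i) * (⟪u i, w⟫ • y) = ι ℝ w * y := by
    simp_rw [mul_smul_comm, ← smul_mul_assoc, ← Finset.sum_mul, ← map_smul, ← map_sum, hw]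
  have hswap : ∀ i, ι ℝ (f i) * (ι ℝ w * lc (u i) y) = -(ι ℝ w * (ι ℝ (f i) * lc (u i) y)) := by
    intro i
    rw [← mul_assoc, ← mul_assoc, ← neg_mul, eq_neg_of_add_eq_zero_left (ι_add_mul_swap _ _)]
  simp only [eulerOperator_apply, h.lc_ι_mul, mul_sub, hswap, sub_neg_eq_add,
    Finset.sum_add_distrib, hscalar, Finset.mul_sum]

theorem exteriorVectors_pow_le_eigenspace (h : IsLeftContraction ginv lc) {W : Submodule ℝ X}
    (hfu : ∀ w ∈ W, ∑ i, ⟪u i, w⟫ • f i = w) (k : ℕ) :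
    exteriorVectors W ^ k ≤ (eulerOperator lc f u).eigenspace (k : ℝ) := by
  induction k with
  | zero =>
    intro x hx
    rw [pow_zero] at hx
    simp [eulerOperator_apply, h.lc_eq_zero_of_mem_one _ hx]
  | succ k ih =>
    rw [pow_succ', Submodule.mul_le]
    intro p hp q hq
    obtain ⟨w, hw, rfl⟩ := Submodule.mem_map.mp hp
    rw [Module.End.mem_eigenspace_iff, h.eulerOperator_ι_mul (hfu w hw),
      Module.End.mem_eigenspace_iff.mp (ih hq)]
    push_cast
    rw [mul_smul_comm, add_smul, one_smul, add_comm]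

end Euler

theorem mem_one_of_forall_lc_eq_zero [FiniteDimensional ℝ X] (h : IsLeftContraction ginv lc)
    {V W : Submodule ℝ X} (hVW : V ⊓ W = ⊥) {x : ExteriorAlgebra ℝ X}
    (hx : x ∈ exteriorSubalgebra W) (hlc : ∀ u ∈ Vᗮ, lc u x = 0) :
    x ∈ (1 : Submodule ℝ (ExteriorAlgebra ℝ X)) := by
  let b := stdOrthonormalBasis ℝ W
  choose u hu hinner using fun i => exists_mem_orthogonal_inner_eq hVW (b i : X)
  have hfu : ∀ w ∈ W, ∑ i, ⟪u i, w⟫ • (b i : X) = w := fun w hw => by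
    simp_rw [hinner _ w hw]
    simpa [Submodule.coe_inner] using congrArg Subtype.val (b.sum_repr' ⟨w, hw⟩)
  set E := eulerOperator lc (fun i => (b i : X)) u
  have hEx : E x = 0 := by simp [E, eulerOperator_apply, hlc _ (hu _)]
  have hx' := mem_iSup_exteriorVectors_pow hx
  rw [← sup_iSup_nat_succ] at hx'
  -- `x = y + z` with `y` a scalar and `z` a sum of eigenvectors of `E` with positive eigenvalues
  obtain ⟨y, hy, z, hz, rfl⟩ := Submodule.mem_sup.mp hx'
  have hEy : E y = 0 := by
    simpa using Module.End.mem_eigenspace_iff.mp (h.exteriorVectors_pow_le_eigenspace hfu 0 hy)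
  have hz_zero : z ∈ E.eigenspace 0 := by
    rw [Module.End.mem_eigenspace_iff, zero_smul, ← add_sub_cancel_left y z, map_sub, hEx, hEy,
      sub_zero]
  have hz_pos : z ∈ ⨆ μ ≠ (0 : ℝ), E.eigenspace μ := by
    refine (iSup_le fun k => ?_ : ⨆ k, exteriorVectors W ^ (k + 1) ≤ _) hz
    exact (h.exteriorVectors_pow_le_eigenspace hfu (k + 1)).trans
      (le_iSup₂ (f := fun μ _ => E.eigenspace μ) _ (by positivity))
  rw [Submodule.disjoint_def.mp (E.eigenspaces_iSupIndep 0) z hz_zero hz_pos, add_zero]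
  simpa using hy

theorem apply_mem_exteriorSubalgebra_of_mem_contractions (h : IsLeftContraction ginv lc)
    {K S : Submodule ℝ X} {T : Module.End ℝ (ExteriorAlgebra ℝ X)} (hT : T ∈ contractions lc K)
    {x : ExteriorAlgebra ℝ X} (hx : x ∈ exteriorSubalgebra S) : T x ∈ exteriorSubalgebra S := by
  induction hT using Submonoid.closure_induction generalizing x with
  | mem T hT =>
    obtain ⟨u, -, rfl⟩ := hT
    exact h.lc_mem_exteriorSubalgebra u hx
  | one => exact hx
  | mul T₁ T₂ _ _ ih₁ ih₂ => exact ih₁ (ih₂ hx)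

theorem apply_mul_of_mem_contractions (h : IsLeftContraction ginv lc) {W : Submodule ℝ X}
    {T : Module.End ℝ (ExteriorAlgebra ℝ X)} (hT : T ∈ contractions lc Wᗮ)
    {y : ExteriorAlgebra ℝ X} (hy : y ∈ exteriorSubalgebra W) (x : ExteriorAlgebra ℝ X) :
    T (x * y) = T x * y := by
  induction hT using Submonoid.closure_induction generalizing x with
  | mem T hT =>
    obtain ⟨u, hu, rfl⟩ := hT
    rw [h.lc_mul, h.lc_eq_zero_of_mem_orthogonal hu hy, mul_zero, add_zero]
  | one => rfl
  | mul T₁ T₂ _ _ ih₁ ih₂ => rw [Module.End.mul_apply, ih₂, ih₁]; rfl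

theorem exists_mem_contractions_apply_mem_one [FiniteDimensional ℝ X]
    (h : IsLeftContraction ginv lc) {V W : Submodule ℝ X} (hVW : V ⊓ W = ⊥)
    {y : ExteriorAlgebra ℝ X} (hy : y ∈ exteriorSubalgebra W) (hy0 : y ≠ 0) :
    ∃ T ∈ contractions lc Vᗮ, T y ∈ (1 : Submodule ℝ (ExteriorAlgebra ℝ X)) ∧ T y ≠ 0 := by
  obtain ⟨n, hyn⟩ := exists_mem_degreeLE hy
  induction n generalizing y with
  | zero => exact ⟨1, one_mem _, degreeLE_zero W ▸ hyn, hy0⟩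
  | succ n ih =>
    by_cases hlc : ∀ u ∈ Vᗮ, lc u y = 0
    · exact ⟨1, one_mem _, h.mem_one_of_forall_lc_eq_zero hVW hy hlc, hy0⟩
    obtain ⟨u, hu, hu0⟩ := not_forall₂.mp hlc
    obtain ⟨T, hT, hTy⟩ := ih (h.lc_mem_exteriorSubalgebra u hy) hu0 (h.lc_mem_degreeLE u hyn)
    exact ⟨T * lc u, mul_mem hT (Submonoid.subset_closure ⟨u, hu, rfl⟩), hTy⟩

theorem mul_ne_zero_of_inf_eq_bot [FiniteDimensional ℝ X] (h : IsLeftContraction ginv lc)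
    {V W : Submodule ℝ X} (hVW : V ⊓ W = ⊥) {a y : ExteriorAlgebra ℝ X}
    (ha : a ∈ exteriorSubalgebra V) (hy : y ∈ exteriorSubalgebra W) (ha0 : a ≠ 0) (hy0 : y ≠ 0) :
    a * y ≠ 0 := by
  obtain ⟨T, hT, hTa, hTa0⟩ :=
    h.exists_mem_contractions_apply_mem_one (inf_comm V W ▸ hVW) ha ha0
  obtain ⟨c, hc⟩ := Submodule.mem_one.mp hTa
  have hc0 : c ≠ 0 := by rintro rfl; exact hTa0 (by rw [← hc, map_zero])
  intro hay
  have hTay := h.apply_mul_of_mem_contractions hT hy a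
  rw [hay, map_zero, ← hc, ← Algebra.smul_def, eq_comm, smul_eq_zero] at hTay
  exact hTay.elim hc0 hy0

theorem mem_one_of_mul_mem [FiniteDimensional ℝ X] (h : IsLeftContraction ginv lc)
    {V W : Submodule ℝ X} (hVW : V ⊓ W = ⊥) {b y : ExteriorAlgebra ℝ X}
    (hb : b ∈ exteriorSubalgebra V) (hy : y ∈ exteriorSubalgebra W) (hy0 : y ≠ 0)
    (hby : b * y ∈ exteriorSubalgebra W) : b ∈ (1 : Submodule ℝ (ExteriorAlgebra ℝ X)) := by
  refine h.mem_one_of_forall_lc_eq_zero (inf_comm V W ▸ hVW) hb fun u hu => ?_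
  have hlc : lc u b * y = 0 := by
    rw [← h.lc_eq_zero_of_mem_orthogonal hu hby, h.lc_mul, h.lc_eq_zero_of_mem_orthogonal hu hy,
      mul_zero, add_zero]
  by_contra hne
  exact h.mul_ne_zero_of_inf_eq_bot hVW (h.lc_mem_exteriorSubalgebra u hb) hy hne hy0 hlc

theorem exists_lc_eq_mul_of_lc_mul_eq_zero [FiniteDimensional ℝ X]
    (h : IsLeftContraction ginv lc) {V W : Submodule ℝ X} (hVW : V ⊓ W = ⊥) {v : X}
    {M N : ExteriorAlgebra ℝ X} (hM : M ∈ exteriorSubalgebra V) (hN : N ∈ exteriorSubalgebra W)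
    (hM0 : M ≠ 0) (hMN : lc v (M * N) = 0) :
    ∃ b ∈ exteriorSubalgebra V, lc v N = b * N := by
  have hgM : ginv M ≠ 0 := (h.ginv_involutive.injective.ne_iff' (map_zero ginv)).mpr hM0
  obtain ⟨T, hT, hTM, hTM0⟩ := h.exists_mem_contractions_apply_mem_one (inf_comm V W ▸ hVW)
    (h.ginv_mem_exteriorSubalgebra hM) hgM
  obtain ⟨c, hc⟩ := Submodule.mem_one.mp hTM
  have hc0 : c ≠ 0 := by rintro rfl; exact hTM0 (by rw [← hc, map_zero])
  have hsum := congrArg T hMN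
  rw [h.lc_mul, map_add, map_zero, h.apply_mul_of_mem_contractions hT hN,
    h.apply_mul_of_mem_contractions hT (h.lc_mem_exteriorSubalgebra v hN), ← hc,
    ← Algebra.smul_def] at hsum
  refine ⟨-c⁻¹ • T (lc v M), Subalgebra.smul_mem _
    (h.apply_mem_exteriorSubalgebra_of_mem_contractions hT (h.lc_mem_exteriorSubalgebra v hM)) _, ?_⟩
  rw [smul_mul_assoc, neg_smul, ← smul_neg, ← eq_neg_of_add_eq_zero_right hsum, smul_smul,
    inv_mul_cancel₀ hc0, one_smul]

end IsLeftContraction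

end Contraction

/-- for disjoint subspaces `V, W` and nonzero `M ∈ ⋀V`, `N ∈ ⋀W`,
`v⌟(M∧N) = 0 ↔ v⌟M = 0 ∧ v⌟N = 0`. -/
theorem stmt5 {X : Type*} [NormedAddCommGroup X] [InnerProductSpace ℝ X] [FiniteDimensional ℝ X]
    -- the grade involution: the unique algebra automorphism with `v̂ = -v` on vectors
    (ginv : ExteriorAlgebra ℝ X →ₐ[ℝ] ExteriorAlgebra ℝ X)
    (hginv : ∀ v : X, ginv (ExteriorAlgebra.ι ℝ v) = - ExteriorAlgebra.ι ℝ v)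
    -- the left contraction by a vector, characterized by its defining properties
    (lc : X → ExteriorAlgebra ℝ X →ₗ[ℝ] ExteriorAlgebra ℝ X)
    (hlc_one : ∀ v : X, lc v 1 = 0)
    (hlc_vec : ∀ v w : X, lc v (ExteriorAlgebra.ι ℝ w) = algebraMap ℝ (ExteriorAlgebra ℝ X) ⟪v, w⟫)
    (hlc_mul : ∀ (v : X) (M N : ExteriorAlgebra ℝ X),
      lc v (M * N) = lc v M * N + ginv M * lc v N)
    (V W : Submodule ℝ X) (hVW : V ⊓ W = ⊥)
    (M N : ExteriorAlgebra ℝ X)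
    (hM : M ∈ Algebra.adjoin ℝ (⇑(ExteriorAlgebra.ι ℝ (M := X)) '' (V : Set X)))
    (hN : N ∈ Algebra.adjoin ℝ (⇑(ExteriorAlgebra.ι ℝ (M := X)) '' (W : Set X)))
    (hM0 : M ≠ 0) (hN0 : N ≠ 0) (v : X) :
    lc v (M * N) = 0 ↔ lc v M = 0 ∧ lc v N = 0 := by
  have h : IsLeftContraction ginv lc := ⟨hginv, hlc_one, hlc_vec, hlc_mul⟩
  refine ⟨fun hMN => ?_, fun ⟨hvM, hvN⟩ => by rw [hlc_mul, hvM, hvN, zero_mul, mul_zero, add_zero]⟩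
  obtain ⟨b, hb, hvN⟩ := h.exists_lc_eq_mul_of_lc_mul_eq_zero hVW hM hN hM0 hMN
  obtain ⟨c, rfl⟩ := Submodule.mem_one.mp
    (h.mem_one_of_mul_mem hVW hb hN hN0 (hvN ▸ h.lc_mem_exteriorSubalgebra v hN))
  rw [← Algebra.smul_def] at hvN
  have hvN0 : lc v N = 0 := by
    rcases eq_or_ne c 0 with rfl | hc
    · rwa [zero_smul] at hvN
    · exact absurd (h.eq_zero_of_lc_eq_smul hc hN hvN) hN0
  rw [hlc_mul, hvN0, mul_zero, add_zero] at hMN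
  refine ⟨?_, hvN0⟩
  by_contra hvM
  exact h.mul_ne_zero_of_inf_eq_bot hVW (h.lc_mem_exteriorSubalgebra v hM) hN hvM hN0 hMN
end

section
/- Let b₁,…,b_p ∈ X be orthonormal and B = b₁∧⋯∧b_p. Let P : X → X be the orthogonal projection onto span{b₁,…,b_p} and P⊥ : X → X the orthogonal projection onto its orthogonal complement, with ⋀P, ⋀P⊥ : ⋀X → ⋀X the induced algebra homomorphisms (outermorphisms). Then for every M ∈ ⋀X: (B⌞M)⌟B = ⋀P(M) and B⌟(B∧M) = ⋀P⊥(M). -/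
/-!
Write `B = b₁ ∧ ⋯ ∧ b_p` and `K = span b`. Both identities are proved by induction on `M` along
products `v ∧ N`, by showing that the left-hand side transforms like an outermorphism.

For `B⌟(B∧M)`: moving `v` across `B` costs `(-1)^p` and kills the `K`-component of `v`, so
`B ∧ v ∧ N = (-1)^p (P⊥v) ∧ B ∧ N`; as `P⊥v ⊥ K`, contracting by `B` costs the same sign again,
whence `B⌟(B ∧ v ∧ N) = P⊥v ∧ (B⌟(B∧N))`. The base case is `B⌟B = 1`.

For `(B⌞M)⌟B` the key identity is `(Z⌞v)⌟Q = v ∧ (Z⌟Q) − Ẑ⌟(v∧Q)`. Every `Z = B⌞N` lies in the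
subalgebra generated by `K`, on which `·⌞w` vanishes for `w ⊥ K`. Applying the identity also to
`w = v − Pv`, which satisfies `w ∧ B = v ∧ B`, gives `(Z⌞v)⌟B = Pv ∧ (Z⌟B)`.
-/

open scoped RealInnerProductSpace

open ExteriorAlgebra (ι ιMulti ιMulti_succ_apply)

theorem expBlade_eq_ιMulti {X : Type*} [AddCommGroup X] [Module ℝ X] {k : ℕ} (v : Fin k → X) :
    expBlade v = ιMulti ℝ k v :=
  rfl

namespace ExteriorAlgebra

section CommRing

variable {R V : Type*} [CommRing R] [AddCommGroup V] [Module R V]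

theorem ι_mul_ι_comm (x y : V) : ι R x * ι R y = -(ι R y * ι R x) :=
  eq_neg_of_add_eq_zero_left (ι_add_mul_swap x y)

theorem ιMulti_mul_ι {n : ℕ} (b : Fin n → V) (w : V) :
    ιMulti R n b * ι R w = (-1 : R) ^ n • (ι R w * ιMulti R n b) := by
  induction n with
  | zero => simp
  | succ n ih =>
    rw [ιMulti_succ_apply, mul_assoc, ih, mul_smul_comm, ← mul_assoc, ← mul_assoc,
      ι_mul_ι_comm (b 0), pow_succ, mul_smul]
    simp

theorem ι_mul_ιMulti {n : ℕ} (v : V) (b : Fin n → V) :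
    ι R v * ιMulti R n b = ιMulti R (n + 1) (Fin.cons v b) := by
  rw [ιMulti_succ_apply]
  rfl

@[elab_as_elim]
theorem induction_ι_mul {C : ExteriorAlgebra R V → Prop}
    (algebraMap : ∀ r, C (algebraMap R _ r)) (add : ∀ x y, C x → C y → C (x + y))
    (ι_mul : ∀ v x, C x → C (ι R v * x)) (x : ExteriorAlgebra R V) : C x :=
  CliffordAlgebra.left_induction 0 algebraMap add (fun x v => ι_mul v x) x

end CommRing

section Field

variable {K V : Type*} [Field K] [AddCommGroup V] [Module K V] {n : ℕ} (b : Fin n → V)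

theorem ι_mul_ιMulti_eq_zero {v : V} (hv : v ∈ Submodule.span K (Set.range b)) :
    ι K v * ιMulti K n b = 0 := by
  rw [ι_mul_ιMulti]
  exact AlternatingMap.map_linearDependent _ _ fun h => (linearIndependent_finCons.mp h).2 hv

theorem ι_mul_ιMulti_eq_of_sub_mem_span {v w : V} (h : v - w ∈ Submodule.span K (Set.range b)) :
    ι K v * ιMulti K n b = ι K w * ιMulti K n b := by
  rw [← sub_eq_zero, ← sub_mul, ← map_sub]
  exact ι_mul_ιMulti_eq_zero b h

end Field

end ExteriorAlgebra

section Contractions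

variable {X : Type*} [NormedAddCommGroup X] [InnerProductSpace ℝ X]
  {ginv : ExteriorAlgebra ℝ X →ₐ[ℝ] ExteriorAlgebra ℝ X}
  {lc rc : X → ExteriorAlgebra ℝ X →ₗ[ℝ] ExteriorAlgebra ℝ X}
  {LC RC : ExteriorAlgebra ℝ X →ₗ[ℝ] ExteriorAlgebra ℝ X →ₗ[ℝ] ExteriorAlgebra ℝ X}

structure IsLeftContraction_s6 (ginv : ExteriorAlgebra ℝ X →ₐ[ℝ] ExteriorAlgebra ℝ X)
    (lc : X → ExteriorAlgebra ℝ X →ₗ[ℝ] ExteriorAlgebra ℝ X) : Prop where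
  map_one : ∀ v, lc v 1 = 0
  map_ι : ∀ v w, lc v (ι ℝ w) = algebraMap ℝ _ ⟪v, w⟫
  map_mul : ∀ v M N, lc v (M * N) = lc v M * N + ginv M * lc v N

structure IsRightContraction (ginv : ExteriorAlgebra ℝ X →ₐ[ℝ] ExteriorAlgebra ℝ X)
    (rc : X → ExteriorAlgebra ℝ X →ₗ[ℝ] ExteriorAlgebra ℝ X) : Prop where
  map_one : ∀ v, rc v 1 = 0
  map_ι : ∀ v w, rc v (ι ℝ w) = algebraMap ℝ _ ⟪v, w⟫
  map_mul : ∀ v M N, rc v (M * N) = M * rc v N + rc v M * ginv N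

structure IsIteratedLeftContraction (lc : X → ExteriorAlgebra ℝ X →ₗ[ℝ] ExteriorAlgebra ℝ X)
    (LC : ExteriorAlgebra ℝ X →ₗ[ℝ] ExteriorAlgebra ℝ X →ₗ[ℝ] ExteriorAlgebra ℝ X) : Prop where
  one_left : ∀ N, LC 1 N = N
  ι_mul_left : ∀ v M N, LC (ι ℝ v * M) N = LC M (lc v N)

/-- `RC N M` stands for `N ⌞ M`: the contractee comes first. -/
structure IsIteratedRightContraction (rc : X → ExteriorAlgebra ℝ X →ₗ[ℝ] ExteriorAlgebra ℝ X)
    (RC : ExteriorAlgebra ℝ X →ₗ[ℝ] ExteriorAlgebra ℝ X →ₗ[ℝ] ExteriorAlgebra ℝ X) : Prop where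
  right_one : ∀ N, RC N 1 = N
  right_ι_mul : ∀ v M N, RC N (ι ℝ v * M) = rc v (RC N M)

theorem IsLeftContraction_s6.ι_mul (hginv : ∀ v, ginv (ι ℝ v) = -ι ℝ v)
    (hlc : IsLeftContraction_s6 ginv lc) (v w : X) (N : ExteriorAlgebra ℝ X) :
    lc v (ι ℝ w * N) = ⟪v, w⟫ • N - ι ℝ w * lc v N := by
  rw [hlc.map_mul, hlc.map_ι, hginv, ← Algebra.smul_def, neg_mul, sub_eq_add_neg]

theorem IsRightContraction.ι_mul (hrc : IsRightContraction ginv rc) (v w : X)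
    (N : ExteriorAlgebra ℝ X) : rc v (ι ℝ w * N) = ι ℝ w * rc v N + ⟪v, w⟫ • ginv N := by
  rw [hrc.map_mul, hrc.map_ι, ← Algebra.smul_def]

theorem IsIteratedRightContraction.right_algebraMap (hRC : IsIteratedRightContraction rc RC)
    (N : ExteriorAlgebra ℝ X) (r : ℝ) : RC N (algebraMap ℝ _ r) = r • N := by
  rw [Algebra.algebraMap_eq_smul_one, map_smul, hRC.right_one]

theorem IsLeftContraction_s6.ιMulti_eq_zero (hginv : ∀ v, ginv (ι ℝ v) = -ι ℝ v)
    (hlc : IsLeftContraction_s6 ginv lc) {n : ℕ} (b : Fin n → X) {u : X} (hu : ∀ i, ⟪u, b i⟫ = 0) :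
    lc u (ιMulti ℝ n b) = 0 := by
  induction n with
  | zero => rw [ExteriorAlgebra.ιMulti_zero_apply, hlc.map_one]
  | succ n ih =>
    rw [ιMulti_succ_apply, hlc.ι_mul hginv, hu, ih (Matrix.vecTail b) fun i => hu i.succ,
      zero_smul, mul_zero, sub_zero]

theorem IsIteratedLeftContraction.ιMulti_ι_mul (hginv : ∀ v, ginv (ι ℝ v) = -ι ℝ v)
    (hlc : IsLeftContraction_s6 ginv lc) (hLC : IsIteratedLeftContraction lc LC) {n : ℕ}
    (b : Fin n → X) {w : X} (hw : ∀ i, ⟪b i, w⟫ = 0) (N : ExteriorAlgebra ℝ X) :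
    LC (ιMulti ℝ n b) (ι ℝ w * N) = (-1 : ℝ) ^ n • (ι ℝ w * LC (ιMulti ℝ n b) N) := by
  induction n generalizing N with
  | zero => simp [hLC.one_left]
  | succ n ih =>
    rw [ιMulti_succ_apply, hLC.ι_mul_left, hLC.ι_mul_left, hlc.ι_mul hginv, hw, zero_smul,
      zero_sub, map_neg, ih (Matrix.vecTail b) (fun i => hw i.succ), pow_succ, mul_neg_one,
      neg_smul]

theorem IsIteratedLeftContraction.ιMulti_self (hginv : ∀ v, ginv (ι ℝ v) = -ι ℝ v)
    (hlc : IsLeftContraction_s6 ginv lc) (hLC : IsIteratedLeftContraction lc LC) {n : ℕ}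
    {b : Fin n → X} (hb : Orthonormal ℝ b) : LC (ιMulti ℝ n b) (ιMulti ℝ n b) = 1 := by
  induction n with
  | zero => rw [ExteriorAlgebra.ιMulti_zero_apply, hLC.one_left]
  | succ n ih =>
    rw [ιMulti_succ_apply, hLC.ι_mul_left, hlc.ι_mul hginv, real_inner_self_eq_norm_sq, hb.1,
      hlc.ιMulti_eq_zero hginv (Matrix.vecTail b) fun i => hb.2 (Fin.succ_ne_zero i).symm,
      mul_zero, sub_zero, one_pow, one_smul]
    exact ih (hb.comp _ (Fin.succ_injective n))

theorem IsIteratedLeftContraction.ιMulti_ιMulti_mul (hginv : ∀ v, ginv (ι ℝ v) = -ι ℝ v)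
    (hlc : IsLeftContraction_s6 ginv lc) (hLC : IsIteratedLeftContraction lc LC) {n : ℕ}
    {b : Fin n → X} (hb : Orthonormal ℝ b) {Q : X → X}
    (hQ : ∀ x, Q x ∈ (Submodule.span ℝ (Set.range b))ᗮ ∧ x - Q x ∈ Submodule.span ℝ (Set.range b))
    {ΛQ : ExteriorAlgebra ℝ X →ₐ[ℝ] ExteriorAlgebra ℝ X} (hΛQ : ∀ v, ΛQ (ι ℝ v) = ι ℝ (Q v))
    (N : ExteriorAlgebra ℝ X) : LC (ιMulti ℝ n b) (ιMulti ℝ n b * N) = ΛQ N := by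
  induction N using ExteriorAlgebra.induction_ι_mul with
  | algebraMap r =>
    rw [Algebra.algebraMap_eq_smul_one, mul_smul_comm, mul_one, map_smul,
      hLC.ιMulti_self hginv hlc hb, map_smul, map_one]
  | add x y hx hy => rw [mul_add, map_add, hx, hy, map_add]
  | ι_mul v x hx =>
    have hQv : ∀ i, ⟪b i, Q v⟫ = 0 := fun i =>
      Submodule.inner_right_of_mem_orthogonal (Submodule.subset_span (Set.mem_range_self i))
        (hQ v).1
    rw [← mul_assoc, ExteriorAlgebra.ιMulti_mul_ι,
      ExteriorAlgebra.ι_mul_ιMulti_eq_of_sub_mem_span b (hQ v).2, smul_mul_assoc, mul_assoc,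
      map_smul, hLC.ιMulti_ι_mul hginv hlc b hQv, hx, smul_smul,
      ← pow_add, (Even.add_self n).neg_one_pow, one_smul, map_mul, hΛQ]

theorem IsIteratedLeftContraction.apply_rc (hginv : ∀ v, ginv (ι ℝ v) = -ι ℝ v)
    (hlc : IsLeftContraction_s6 ginv lc) (hrc : IsRightContraction ginv rc)
    (hLC : IsIteratedLeftContraction lc LC) (v : X) (Z Q : ExteriorAlgebra ℝ X) :
    LC (rc v Z) Q = ι ℝ v * LC Z Q - LC (ginv Z) (ι ℝ v * Q) := by
  induction Z using ExteriorAlgebra.induction_ι_mul generalizing Q with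
  | algebraMap r =>
    rw [Algebra.algebraMap_eq_smul_one]
    simp only [map_smul, hrc.map_one, map_one, smul_zero, map_zero, LinearMap.zero_apply,
      LinearMap.smul_apply, hLC.one_left, mul_smul_comm, sub_self]
  | add x y hx hy =>
    simp only [map_add, LinearMap.add_apply, hx, hy, mul_add]
    abel
  | ι_mul m x hx =>
    rw [hrc.ι_mul, map_add, map_smul, LinearMap.add_apply, LinearMap.smul_apply,
      hLC.ι_mul_left, hx, map_mul ginv, hginv, neg_mul, map_neg, LinearMap.neg_apply,
      hLC.ι_mul_left, hLC.ι_mul_left, hlc.ι_mul hginv, map_sub, map_smul, real_inner_comm]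
    abel

theorem IsIteratedLeftContraction.apply_rc_of_rc_eq_zero (hginv : ∀ v, ginv (ι ℝ v) = -ι ℝ v)
    (hlc : IsLeftContraction_s6 ginv lc) (hrc : IsRightContraction ginv rc)
    (hLC : IsIteratedLeftContraction lc LC) {v w : X} {Z Q : ExteriorAlgebra ℝ X}
    (hw : rc w Z = 0) (hQ : ι ℝ v * Q = ι ℝ w * Q) :
    LC (rc v Z) Q = ι ℝ (v - w) * LC Z Q := by
  have h := hLC.apply_rc hginv hlc hrc w Z Q
  rw [hw, map_zero, LinearMap.zero_apply, eq_comm, sub_eq_zero] at h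
  rw [hLC.apply_rc hginv hlc hrc, hQ, ← h, map_sub, sub_mul]

section Adjoin

variable {K : Submodule ℝ X} {z : ExteriorAlgebra ℝ X}

theorem ginv_mem_adjoin (hginv : ∀ v, ginv (ι ℝ v) = -ι ℝ v)
    (hz : z ∈ Algebra.adjoin ℝ (ι ℝ '' K)) : ginv z ∈ Algebra.adjoin ℝ (ι ℝ '' K) := by
  induction hz using Algebra.adjoin_induction with
  | mem x hx =>
    obtain ⟨k, hk, rfl⟩ := hx
    rw [hginv, ← map_neg]
    exact Algebra.subset_adjoin ⟨-k, K.neg_mem hk, rfl⟩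
  | algebraMap r => rw [AlgHom.commutes]; exact Subalgebra.algebraMap_mem _ r
  | add x y _ _ hx hy => rw [map_add]; exact add_mem hx hy
  | mul x y _ _ hx hy => rw [map_mul]; exact mul_mem hx hy

theorem IsRightContraction.mem_adjoin (hginv : ∀ v, ginv (ι ℝ v) = -ι ℝ v)
    (hrc : IsRightContraction ginv rc) (v : X) (hz : z ∈ Algebra.adjoin ℝ (ι ℝ '' K)) :
    rc v z ∈ Algebra.adjoin ℝ (ι ℝ '' K) := by
  induction hz using Algebra.adjoin_induction with
  | mem x hx =>
    obtain ⟨k, -, rfl⟩ := hx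
    rw [hrc.map_ι]
    exact Subalgebra.algebraMap_mem _ _
  | algebraMap r =>
    rw [Algebra.algebraMap_eq_smul_one, map_smul, hrc.map_one, smul_zero]
    exact zero_mem _
  | add x y _ _ hx hy => rw [map_add]; exact add_mem hx hy
  | mul x y hx' hy' hx hy =>
    rw [hrc.map_mul]
    exact add_mem (mul_mem hx' hy) (mul_mem hx (ginv_mem_adjoin hginv hy'))

theorem IsRightContraction.eq_zero_of_mem_orthogonal (hrc : IsRightContraction ginv rc) {w : X}
    (hw : w ∈ Kᗮ) (hz : z ∈ Algebra.adjoin ℝ (ι ℝ '' K)) : rc w z = 0 := by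
  induction hz using Algebra.adjoin_induction with
  | mem x hx =>
    obtain ⟨k, hk, rfl⟩ := hx
    rw [hrc.map_ι, K.inner_left_of_mem_orthogonal hk hw, map_zero]
  | algebraMap r => rw [Algebra.algebraMap_eq_smul_one, map_smul, hrc.map_one, smul_zero]
  | add x y _ _ hx hy => rw [map_add, hx, hy, add_zero]
  | mul x y _ _ hx hy => rw [hrc.map_mul, hx, hy, mul_zero, zero_mul, add_zero]

theorem IsIteratedRightContraction.mem_adjoin (hginv : ∀ v, ginv (ι ℝ v) = -ι ℝ v)
    (hrc : IsRightContraction ginv rc) (hRC : IsIteratedRightContraction rc RC)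
    (hz : z ∈ Algebra.adjoin ℝ (ι ℝ '' K)) (M : ExteriorAlgebra ℝ X) :
    RC z M ∈ Algebra.adjoin ℝ (ι ℝ '' K) := by
  induction M using ExteriorAlgebra.induction_ι_mul with
  | algebraMap r => rw [hRC.right_algebraMap]; exact Subalgebra.smul_mem _ hz r
  | add x y hx hy => rw [map_add]; exact add_mem hx hy
  | ι_mul v x hx => rw [hRC.right_ι_mul]; exact hrc.mem_adjoin hginv v hx

theorem ιMulti_mem_adjoin {n : ℕ} {b : Fin n → X} (hbK : ∀ i, b i ∈ K) :
    ιMulti ℝ n b ∈ Algebra.adjoin ℝ (ι ℝ '' K) := by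
  rw [ExteriorAlgebra.ιMulti_apply]
  refine Subalgebra.list_prod_mem _ fun x hx => ?_
  obtain ⟨i, rfl⟩ := List.mem_ofFn.mp hx
  exact Algebra.subset_adjoin ⟨b i, hbK i, rfl⟩

end Adjoin

theorem IsIteratedLeftContraction.RC_ιMulti_ιMulti (hginv : ∀ v, ginv (ι ℝ v) = -ι ℝ v)
    (hlc : IsLeftContraction_s6 ginv lc) (hrc : IsRightContraction ginv rc)
    (hLC : IsIteratedLeftContraction lc LC) (hRC : IsIteratedRightContraction rc RC) {n : ℕ}
    {b : Fin n → X} (hb : Orthonormal ℝ b) {P : X → X}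
    (hP : ∀ x, P x ∈ Submodule.span ℝ (Set.range b) ∧ x - P x ∈ (Submodule.span ℝ (Set.range b))ᗮ)
    {ΛP : ExteriorAlgebra ℝ X →ₐ[ℝ] ExteriorAlgebra ℝ X} (hΛP : ∀ v, ΛP (ι ℝ v) = ι ℝ (P v))
    (M : ExteriorAlgebra ℝ X) : LC (RC (ιMulti ℝ n b) M) (ιMulti ℝ n b) = ΛP M := by
  induction M using ExteriorAlgebra.induction_ι_mul with
  | algebraMap r =>
    rw [hRC.right_algebraMap, map_smul, LinearMap.smul_apply, hLC.ιMulti_self hginv hlc hb,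
      AlgHom.commutes, Algebra.algebraMap_eq_smul_one]
  | add x y hx hy => rw [map_add, map_add, LinearMap.add_apply, hx, hy, map_add]
  | ι_mul v x hx =>
    have hZ : RC (ιMulti ℝ n b) x ∈ Algebra.adjoin ℝ (ι ℝ '' Submodule.span ℝ (Set.range b)) :=
      hRC.mem_adjoin hginv hrc
        (ιMulti_mem_adjoin fun i => Submodule.subset_span (Set.mem_range_self i)) x
    have hvB : ι ℝ v * ιMulti ℝ n b = ι ℝ (v - P v) * ιMulti ℝ n b :=
      ExteriorAlgebra.ι_mul_ιMulti_eq_of_sub_mem_span b (by rw [sub_sub_cancel]; exact (hP v).1)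
    rw [hRC.right_ι_mul, hLC.apply_rc_of_rc_eq_zero hginv hlc hrc
      (hrc.eq_zero_of_mem_orthogonal (hP v).2 hZ) hvB, sub_sub_cancel, hx, map_mul, hΛP]

end Contractions

theorem stmt6_general {X : Type*} [NormedAddCommGroup X] [InnerProductSpace ℝ X]
    -- the grade involution: the unique algebra automorphism with `v̂ = -v` on vectors
    (ginv : ExteriorAlgebra ℝ X →ₐ[ℝ] ExteriorAlgebra ℝ X)
    (hginv : ∀ v : X, ginv (ExteriorAlgebra.ι ℝ v) = - ExteriorAlgebra.ι ℝ v)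
    -- the left contraction by a vector, characterized by its defining properties
    (lc : X → ExteriorAlgebra ℝ X →ₗ[ℝ] ExteriorAlgebra ℝ X)
    (hlc_one : ∀ v : X, lc v 1 = 0)
    (hlc_vec : ∀ v w : X, lc v (ExteriorAlgebra.ι ℝ w) = algebraMap ℝ (ExteriorAlgebra ℝ X) ⟪v, w⟫)
    (hlc_mul : ∀ (v : X) (M N : ExteriorAlgebra ℝ X),
      lc v (M * N) = lc v M * N + ginv M * lc v N)
    -- the right contraction by a vector `N ↦ N⌞v`, characterized by its defining properties
    (rc : X → ExteriorAlgebra ℝ X →ₗ[ℝ] ExteriorAlgebra ℝ X)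
    (hrc_one : ∀ v : X, rc v 1 = 0)
    (hrc_vec : ∀ v w : X, rc v (ExteriorAlgebra.ι ℝ w) = algebraMap ℝ (ExteriorAlgebra ℝ X) ⟪v, w⟫)
    (hrc_mul : ∀ (v : X) (M N : ExteriorAlgebra ℝ X),
      rc v (M * N) = M * rc v N + rc v M * ginv N)
    -- the left contraction `LC M N = M ⌟ N`, extended (bi)linearly in the contractor `M`
    (LC : ExteriorAlgebra ℝ X →ₗ[ℝ] ExteriorAlgebra ℝ X →ₗ[ℝ] ExteriorAlgebra ℝ X)
    (hLC_one : ∀ N : ExteriorAlgebra ℝ X, LC 1 N = N)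
    (hLC_mul : ∀ (v : X) (M N : ExteriorAlgebra ℝ X),
      LC (ExteriorAlgebra.ι ℝ v * M) N = LC M (lc v N))
    -- the right contraction `RC N M = N ⌞ M` (contractee `N`, contractor `M`),
    -- extended (bi)linearly in the contractor `M`
    (RC : ExteriorAlgebra ℝ X →ₗ[ℝ] ExteriorAlgebra ℝ X →ₗ[ℝ] ExteriorAlgebra ℝ X)
    (hRC_one : ∀ N : ExteriorAlgebra ℝ X, RC N 1 = N)
    (hRC_mul : ∀ (v : X) (M N : ExteriorAlgebra ℝ X),
      RC N (ExteriorAlgebra.ι ℝ v * M) = rc v (RC N M))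
    {p : ℕ} (b : Fin p → X) (hb : Orthonormal ℝ b)
    -- `P` is the orthogonal projection onto `span{b₁,…,b_p}`
    (P : X →ₗ[ℝ] X)
    (hP : ∀ x : X, P x ∈ Submodule.span ℝ (Set.range b) ∧
      x - P x ∈ (Submodule.span ℝ (Set.range b))ᗮ)
    -- `Pperp` is the orthogonal projection onto the orthogonal complement
    (Pperp : X →ₗ[ℝ] X)
    (hPperp : ∀ x : X, Pperp x ∈ (Submodule.span ℝ (Set.range b))ᗮ ∧
      x - Pperp x ∈ Submodule.span ℝ (Set.range b))
    -- the induced outermorphisms (algebra homomorphisms extending `P` and `Pperp`)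
    (ΛP ΛPperp : ExteriorAlgebra ℝ X →ₐ[ℝ] ExteriorAlgebra ℝ X)
    (hΛP : ∀ v : X, ΛP (ExteriorAlgebra.ι ℝ v) = ExteriorAlgebra.ι ℝ (P v))
    (hΛPperp : ∀ v : X, ΛPperp (ExteriorAlgebra.ι ℝ v) = ExteriorAlgebra.ι ℝ (Pperp v))
    (M : ExteriorAlgebra ℝ X) :
    LC (RC (expBlade b) M) (expBlade b) = ΛP M ∧
    LC (expBlade b) (expBlade b * M) = ΛPperp M := by
  have hlc : IsLeftContraction_s6 ginv lc := ⟨hlc_one, hlc_vec, hlc_mul⟩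
  have hrc : IsRightContraction ginv rc := ⟨hrc_one, hrc_vec, hrc_mul⟩
  have hLC : IsIteratedLeftContraction lc LC := ⟨hLC_one, hLC_mul⟩
  have hRC : IsIteratedRightContraction rc RC := ⟨hRC_one, hRC_mul⟩
  rw [expBlade_eq_ιMulti]
  exact ⟨hLC.RC_ιMulti_ιMulti hginv hlc hrc hRC hb hP hΛP M,
    hLC.ιMulti_ιMulti_mul hginv hlc hb hPperp hΛPperp M⟩

/-- for a unit blade `B = b₁∧⋯∧b_p` built from orthonormal vectors,
`(B⌞M)⌟B` is the outermorphism of the orthogonal projection onto `span{b}` applied to `M`,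
and `B⌟(B∧M)` is the outermorphism of the orthogonal projection onto the orthogonal
complement applied to `M`. -/
theorem stmt6 {X : Type*} [NormedAddCommGroup X] [InnerProductSpace ℝ X] [FiniteDimensional ℝ X]
    -- the grade involution: the unique algebra automorphism with `v̂ = -v` on vectors
    (ginv : ExteriorAlgebra ℝ X →ₐ[ℝ] ExteriorAlgebra ℝ X)
    (hginv : ∀ v : X, ginv (ExteriorAlgebra.ι ℝ v) = - ExteriorAlgebra.ι ℝ v)
    -- the left contraction by a vector, characterized by its defining properties
    (lc : X → ExteriorAlgebra ℝ X →ₗ[ℝ] ExteriorAlgebra ℝ X)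
    (hlc_one : ∀ v : X, lc v 1 = 0)
    (hlc_vec : ∀ v w : X, lc v (ExteriorAlgebra.ι ℝ w) = algebraMap ℝ (ExteriorAlgebra ℝ X) ⟪v, w⟫)
    (hlc_mul : ∀ (v : X) (M N : ExteriorAlgebra ℝ X),
      lc v (M * N) = lc v M * N + ginv M * lc v N)
    -- the right contraction by a vector `N ↦ N⌞v`, characterized by its defining properties
    (rc : X → ExteriorAlgebra ℝ X →ₗ[ℝ] ExteriorAlgebra ℝ X)
    (hrc_one : ∀ v : X, rc v 1 = 0)
    (hrc_vec : ∀ v w : X, rc v (ExteriorAlgebra.ι ℝ w) = algebraMap ℝ (ExteriorAlgebra ℝ X) ⟪v, w⟫)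
    (hrc_mul : ∀ (v : X) (M N : ExteriorAlgebra ℝ X),
      rc v (M * N) = M * rc v N + rc v M * ginv N)
    -- the left contraction `LC M N = M ⌟ N`, extended (bi)linearly in the contractor `M`
    (LC : ExteriorAlgebra ℝ X →ₗ[ℝ] ExteriorAlgebra ℝ X →ₗ[ℝ] ExteriorAlgebra ℝ X)
    (hLC_one : ∀ N : ExteriorAlgebra ℝ X, LC 1 N = N)
    (hLC_vec : ∀ (v : X) (N : ExteriorAlgebra ℝ X), LC (ExteriorAlgebra.ι ℝ v) N = lc v N)
    (hLC_mul : ∀ (v : X) (M N : ExteriorAlgebra ℝ X),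
      LC (ExteriorAlgebra.ι ℝ v * M) N = LC M (lc v N))
    -- the right contraction `RC N M = N ⌞ M` (contractee `N`, contractor `M`),
    -- extended (bi)linearly in the contractor `M`
    (RC : ExteriorAlgebra ℝ X →ₗ[ℝ] ExteriorAlgebra ℝ X →ₗ[ℝ] ExteriorAlgebra ℝ X)
    (hRC_one : ∀ N : ExteriorAlgebra ℝ X, RC N 1 = N)
    (hRC_vec : ∀ (v : X) (N : ExteriorAlgebra ℝ X), RC N (ExteriorAlgebra.ι ℝ v) = rc v N)
    (hRC_mul : ∀ (v : X) (M N : ExteriorAlgebra ℝ X),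
      RC N (ExteriorAlgebra.ι ℝ v * M) = rc v (RC N M))
    {p : ℕ} (b : Fin p → X) (hb : Orthonormal ℝ b)
    -- `P` is the orthogonal projection onto `span{b₁,…,b_p}`
    (P : X →ₗ[ℝ] X)
    (hP : ∀ x : X, P x ∈ Submodule.span ℝ (Set.range b) ∧
      x - P x ∈ (Submodule.span ℝ (Set.range b))ᗮ)
    -- `Pperp` is the orthogonal projection onto the orthogonal complement
    (Pperp : X →ₗ[ℝ] X)
    (hPperp : ∀ x : X, Pperp x ∈ (Submodule.span ℝ (Set.range b))ᗮ ∧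
      x - Pperp x ∈ Submodule.span ℝ (Set.range b))
    -- the induced outermorphisms (algebra homomorphisms extending `P` and `Pperp`)
    (ΛP ΛPperp : ExteriorAlgebra ℝ X →ₐ[ℝ] ExteriorAlgebra ℝ X)
    (hΛP : ∀ v : X, ΛP (ExteriorAlgebra.ι ℝ v) = ExteriorAlgebra.ι ℝ (P v))
    (hΛPperp : ∀ v : X, ΛPperp (ExteriorAlgebra.ι ℝ v) = ExteriorAlgebra.ι ℝ (Pperp v))
    (M : ExteriorAlgebra ℝ X) :
    LC (RC (expBlade b) M) (expBlade b) = ΛP M ∧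
    LC (expBlade b) (expBlade b * M) = ΛPperp M :=
  stmt6_general ginv hginv lc hlc_one hlc_vec hlc_mul rc hrc_one hrc_vec hrc_mul LC hLC_one hLC_mul
    RC hRC_one hRC_mul b hb P hP Pperp hPperp ΛP ΛPperp hΛP hΛPperp M
end

section
/- Let (e₁,…,e_n) be an orthonormal basis of X, Ω = e₁∧⋯∧e_n, and ⋆_R M = M⌟Ω, ⋆_L M = Ω⌞M. Then for every M ∈ ⋀X: ⋆_L(⋆_R M) = M and ⋆_R(⋆_L M) = M; moreover ⋆_L(⋆_L M) = ⋆_R(⋆_R M) = M̌, where M̌ denotes the grade involution applied n+1 times (so M̌ = M if n is odd and M̌ = M̂ if n is even). -/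
open scoped RealInnerProductSpace

/-!
For an orthonormal family `v` and a list `A ++ B` of distinct indices, contracting the blade
`v_{A ++ B}` from the left by `v_A`, or from the right by `v_B`, just deletes those factors,
without any sign. If `S` lists some of the indices of `Ω` and `C` the others, then
`Ω = ε v_{S ++ C} = ε σ v_{C ++ S}` with `ε = ±1` the sign of the reordering and
`σ = (-1)^(|S| |C|)`. Hence `⋆_R v_S = ε v_C`, `⋆_L v_C = ε v_S`, `⋆_L v_S = ε σ v_C` and
`⋆_R v_C = ε σ v_S`; so the two stars are mutually inverse on blades, while `⋆_L ⋆_L` and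
`⋆_R ⋆_R` multiply `v_S` by `σ = (-1)^((n + 1) |S|)` (as `n = |S| + |C|`), which is the action
of the `(n+1)`-fold grade involution. Blades span the exterior algebra, and everything is linear.
-/

theorem List.Subperm.exists_perm_append {α : Type*} {l₁ l₂ : List α} (h : l₁.Subperm l₂) :
    ∃ l, l₂.Perm (l₁ ++ l) := by
  obtain ⟨l, hl, hsub⟩ := h
  obtain ⟨r, hr⟩ := hsub.exists_perm_append
  exact ⟨r, hr.trans (hl.append_right r)⟩

namespace ExteriorAlgebra

section Blade

variable {R X κ : Type*} [CommRing R] [AddCommGroup X] [Module R X]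

variable (R) in
noncomputable def blade (v : κ → X) (l : List κ) : ExteriorAlgebra R X :=
  (l.map fun i => ι R (v i)).prod

variable {v : κ → X}

@[simp]
theorem blade_nil : blade R v [] = 1 := rfl

theorem blade_cons (a : κ) (l : List κ) : blade R v (a :: l) = ι R (v a) * blade R v l :=
  List.prod_cons

theorem blade_append (l₁ l₂ : List κ) :
    blade R v (l₁ ++ l₂) = blade R v l₁ * blade R v l₂ := by
  rw [blade, List.map_append, List.prod_append]; rfl

theorem blade_concat (l : List κ) (a : κ) : blade R v (l ++ [a]) = blade R v l * ι R (v a) := by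
  rw [blade_append, blade_cons, blade_nil, mul_one]

theorem ι_mul_ι_swap (x y : X) : ι R x * ι R y = -(ι R y * ι R x) :=
  eq_neg_of_add_eq_zero_left (ι_add_mul_swap x y)

theorem blade_perm {l l' : List κ} (h : l.Perm l') :
    ∃ ε : R, ε * ε = 1 ∧ blade R v l' = ε • blade R v l := by
  induction h with
  | nil => exact ⟨1, one_mul 1, (one_smul R _).symm⟩
  | cons a _ ih =>
    obtain ⟨ε, hε, h⟩ := ih
    exact ⟨ε, hε, by rw [blade_cons, blade_cons, h, mul_smul_comm]⟩
  | swap a b l =>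
    refine ⟨-1, by norm_num, ?_⟩
    rw [blade_cons, blade_cons, blade_cons, blade_cons, ← mul_assoc, ← mul_assoc,
      ι_mul_ι_swap (v a), neg_mul, neg_one_smul]
  | trans _ _ ih₁ ih₂ =>
    obtain ⟨ε₁, hε₁, h₁⟩ := ih₁
    obtain ⟨ε₂, hε₂, h₂⟩ := ih₂
    refine ⟨ε₂ * ε₁, ?_, by rw [h₂, h₁, smul_smul]⟩
    linear_combination ε₁ * ε₁ * hε₂ + hε₁

theorem blade_eq_zero_of_not_nodup {l : List κ} (hl : ¬ l.Nodup) : blade R v l = 0 := by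
  obtain ⟨a, ha⟩ : ∃ a, [a, a].Sublist l := by simpa [List.nodup_iff_sublist] using hl
  obtain ⟨r, hr⟩ := ha.exists_perm_append
  obtain ⟨ε, -, h⟩ := blade_perm (R := R) (v := v) hr.symm
  rw [h, List.cons_append, List.cons_append, blade_cons, blade_cons, ← mul_assoc, ι_sq_zero,
    zero_mul, smul_zero]

theorem ι_mul_blade (x : X) (l : List κ) :
    ι R x * blade R v l = (-1 : R) ^ l.length • (blade R v l * ι R x) := by
  induction l with
  | nil => simp
  | cons a l ih =>
    rw [blade_cons, ← mul_assoc, ι_mul_ι_swap, neg_mul, mul_assoc, ih, mul_smul_comm,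
      List.length_cons, pow_succ, mul_neg_one, neg_smul, ← mul_assoc]

theorem blade_mul_blade_comm (l₁ l₂ : List κ) :
    blade R v l₁ * blade R v l₂ =
      (-1 : R) ^ (l₁.length * l₂.length) • (blade R v l₂ * blade R v l₁) := by
  induction l₁ with
  | nil => simp
  | cons a l ih =>
    rw [blade_cons, mul_assoc, ih, mul_smul_comm, ← mul_assoc, ι_mul_blade, smul_mul_assoc,
      smul_smul, ← pow_add, mul_assoc, ← blade_cons, List.length_cons, add_one_mul, add_comm]

theorem blade_append_comm (l₁ l₂ : List κ) :
    blade R v (l₁ ++ l₂) = (-1 : R) ^ (l₁.length * l₂.length) • blade R v (l₂ ++ l₁) := by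
  rw [blade_append, blade_append, blade_mul_blade_comm]

theorem iterate_apply_blade {ginv : ExteriorAlgebra R X →ₐ[R] ExteriorAlgebra R X}
    (hginv : ∀ x, ginv (ι R x) = -ι R x) (k : ℕ) (l : List κ) :
    ginv^[k] (blade R v l) = (-1 : R) ^ (k * l.length) • blade R v l := by
  have happly : ginv (blade R v l) = (-1 : R) ^ l.length • blade R v l := by
    induction l with
    | nil => simp
    | cons a l ih =>
      rw [blade_cons, map_mul, hginv, ih, mul_smul_comm, neg_mul, smul_neg, List.length_cons,
        pow_succ, mul_neg_one, neg_smul]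
  induction k with
  | zero => simp
  | succ k ih =>
    rw [Function.iterate_succ_apply', ih, map_smul, happly, smul_smul, ← pow_add, add_one_mul]

theorem span_range_blade (hv : Submodule.span R (Set.range v) = ⊤) :
    Submodule.span R (Set.range (blade R v)) = ⊤ := by
  have hadjoin : Algebra.adjoin R (Set.range fun i => ι R (v i)) = ⊤ := by
    rw [eq_top_iff, ← CliffordAlgebra.adjoin_range_ι (Q := 0), Algebra.adjoin_le_iff]
    rintro _ ⟨x, rfl⟩
    have hx : ι R x ∈ (Submodule.span R (Set.range v)).map (ι R) := ⟨x, hv ▸ trivial, rfl⟩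
    rw [Submodule.map_span, ← Set.range_comp] at hx
    exact Algebra.span_le_adjoin R _ hx
  have hclosure : (Submonoid.closure (Set.range fun i => ι R (v i)) : Set (ExteriorAlgebra R X))
      ⊆ Set.range (blade R v) := by
    intro x hx
    induction hx using Submonoid.closure_induction with
    | mem _ h => obtain ⟨i, rfl⟩ := h; exact ⟨[i], mul_one _⟩
    | one => exact ⟨[], rfl⟩
    | mul _ _ _ _ h₁ h₂ =>
      obtain ⟨l₁, rfl⟩ := h₁
      obtain ⟨l₂, rfl⟩ := h₂
      exact ⟨l₁ ++ l₂, blade_append l₁ l₂⟩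
  rw [eq_top_iff, ← Algebra.top_toSubmodule (R := R), ← hadjoin, Algebra.adjoin_eq_span]
  exact Submodule.span_mono hclosure

end Blade

section Contraction

variable {X κ : Type*} [NormedAddCommGroup X] [InnerProductSpace ℝ X]

structure IsLeftContraction (ginv : ExteriorAlgebra ℝ X →ₐ[ℝ] ExteriorAlgebra ℝ X)
    (lc : X → ExteriorAlgebra ℝ X →ₗ[ℝ] ExteriorAlgebra ℝ X) : Prop where
  apply_one : ∀ v, lc v 1 = 0
  apply_ι : ∀ v w, lc v (ι ℝ w) = algebraMap ℝ _ ⟪v, w⟫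
  apply_mul : ∀ v M N, lc v (M * N) = lc v M * N + ginv M * lc v N

structure IsRightContraction (ginv : ExteriorAlgebra ℝ X →ₐ[ℝ] ExteriorAlgebra ℝ X)
    (rc : X → ExteriorAlgebra ℝ X →ₗ[ℝ] ExteriorAlgebra ℝ X) : Prop where
  apply_one : ∀ v, rc v 1 = 0
  apply_ι : ∀ v w, rc v (ι ℝ w) = algebraMap ℝ _ ⟪v, w⟫
  apply_mul : ∀ v M N, rc v (M * N) = M * rc v N + rc v M * ginv N

structure IsLeftExtension (lc : X → ExteriorAlgebra ℝ X →ₗ[ℝ] ExteriorAlgebra ℝ X)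
    (LC : ExteriorAlgebra ℝ X →ₗ[ℝ] ExteriorAlgebra ℝ X →ₗ[ℝ] ExteriorAlgebra ℝ X) : Prop where
  one_left : ∀ N, LC 1 N = N
  ι_mul_left : ∀ v M N, LC (ι ℝ v * M) N = LC M (lc v N)

structure IsRightExtension (rc : X → ExteriorAlgebra ℝ X →ₗ[ℝ] ExteriorAlgebra ℝ X)
    (RC : ExteriorAlgebra ℝ X →ₗ[ℝ] ExteriorAlgebra ℝ X →ₗ[ℝ] ExteriorAlgebra ℝ X) : Prop where
  one_right : ∀ N, RC N 1 = N
  ι_mul_right : ∀ v M N, RC N (ι ℝ v * M) = rc v (RC N M)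

variable {ginv : ExteriorAlgebra ℝ X →ₐ[ℝ] ExteriorAlgebra ℝ X}
  {lc rc : X → ExteriorAlgebra ℝ X →ₗ[ℝ] ExteriorAlgebra ℝ X}
  {LC RC : ExteriorAlgebra ℝ X →ₗ[ℝ] ExteriorAlgebra ℝ X →ₗ[ℝ] ExteriorAlgebra ℝ X}
  {v : κ → X}

namespace IsLeftContraction

variable (hlc : IsLeftContraction ginv lc) (hv : Orthonormal ℝ v)
include hlc hv

theorem apply_blade_of_not_mem {a : κ} {l : List κ} (ha : a ∉ l) :
    lc (v a) (blade ℝ v l) = 0 := by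
  induction l with
  | nil => exact hlc.apply_one _
  | cons b l ih =>
    simp only [List.mem_cons, not_or] at ha
    rw [blade_cons, hlc.apply_mul, hlc.apply_ι, hv.inner_eq_zero ha.1, map_zero, ih ha.2,
      zero_mul, mul_zero, add_zero]

theorem apply_blade_cons {a : κ} {l : List κ} (ha : a ∉ l) :
    lc (v a) (blade ℝ v (a :: l)) = blade ℝ v l := by
  rw [blade_cons, hlc.apply_mul, hlc.apply_ι, real_inner_self_eq_norm_sq, hv.1 a, one_pow,
    map_one, hlc.apply_blade_of_not_mem hv ha, one_mul, mul_zero, add_zero]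

end IsLeftContraction

namespace IsRightContraction

variable (hrc : IsRightContraction ginv rc) (hv : Orthonormal ℝ v)
include hrc hv

theorem apply_blade_of_not_mem {a : κ} {l : List κ} (ha : a ∉ l) :
    rc (v a) (blade ℝ v l) = 0 := by
  induction l with
  | nil => exact hrc.apply_one _
  | cons b l ih =>
    simp only [List.mem_cons, not_or] at ha
    rw [blade_cons, hrc.apply_mul, hrc.apply_ι, hv.inner_eq_zero ha.1, map_zero, ih ha.2,
      zero_mul, mul_zero, add_zero]

theorem apply_blade_concat {a : κ} {l : List κ} (ha : a ∉ l) :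
    rc (v a) (blade ℝ v (l ++ [a])) = blade ℝ v l := by
  rw [blade_concat, hrc.apply_mul, hrc.apply_ι, real_inner_self_eq_norm_sq, hv.1 a, one_pow,
    map_one, hrc.apply_blade_of_not_mem hv ha, mul_one, zero_mul, add_zero]

end IsRightContraction

theorem IsLeftExtension.apply_blade_blade_append (hLC : IsLeftExtension lc LC)
    (hlc : IsLeftContraction ginv lc) (hv : Orthonormal ℝ v) {l₁ l₂ : List κ}
    (h : (l₁ ++ l₂).Nodup) : LC (blade ℝ v l₁) (blade ℝ v (l₁ ++ l₂)) = blade ℝ v l₂ := by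
  induction l₁ with
  | nil => exact hLC.one_left _
  | cons a l₁ ih =>
    rw [List.cons_append, List.nodup_cons] at h
    rw [blade_cons, hLC.ι_mul_left, List.cons_append, hlc.apply_blade_cons hv h.1, ih h.2]

theorem IsRightExtension.apply_blade_append_blade (hRC : IsRightExtension rc RC)
    (hrc : IsRightContraction ginv rc) (hv : Orthonormal ℝ v) {l₁ l₂ : List κ}
    (h : (l₁ ++ l₂).Nodup) : RC (blade ℝ v (l₁ ++ l₂)) (blade ℝ v l₂) = blade ℝ v l₁ := by
  induction l₂ generalizing l₁ with
  | nil => rw [List.append_nil]; exact hRC.one_right _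
  | cons a l₂ ih =>
    rw [List.append_cons] at h ⊢
    have ha : a ∉ l₁ := by grind
    rw [blade_cons, hRC.ι_mul_right, ih h, hrc.apply_blade_concat hv ha]

variable (hlc : IsLeftContraction ginv lc) (hrc : IsRightContraction ginv rc)
  (hLC : IsLeftExtension lc LC) (hRC : IsRightExtension rc RC) (hv : Orthonormal ℝ v)
include hlc hrc hLC hRC hv

theorem contract_blade_of_eq_smul_blade_append {T l₁ l₂ : List κ} {ε : ℝ}
    (hT : blade ℝ v T = ε • blade ℝ v (l₁ ++ l₂)) (h : (l₁ ++ l₂).Nodup) :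
    LC (blade ℝ v l₁) (blade ℝ v T) = ε • blade ℝ v l₂ ∧
      RC (blade ℝ v T) (blade ℝ v l₂) = ε • blade ℝ v l₁ := by
  rw [hT, map_smul, map_smul, LinearMap.smul_apply, hLC.apply_blade_blade_append hlc hv h,
    hRC.apply_blade_append_blade hrc hv h]
  exact ⟨rfl, rfl⟩

theorem hodgeStars_apply_blade (hginv : ∀ x, ginv (ι ℝ x) = -ι ℝ x) {T S : List κ}
    (hT : T.Nodup) (hS : S ⊆ T) :
    RC (blade ℝ v T) (LC (blade ℝ v S) (blade ℝ v T)) = blade ℝ v S ∧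
    LC (RC (blade ℝ v T) (blade ℝ v S)) (blade ℝ v T) = blade ℝ v S ∧
    RC (blade ℝ v T) (RC (blade ℝ v T) (blade ℝ v S)) = ginv^[T.length + 1] (blade ℝ v S) ∧
    LC (LC (blade ℝ v S) (blade ℝ v T)) (blade ℝ v T) = ginv^[T.length + 1] (blade ℝ v S) := by
  by_cases hSn : S.Nodup
  swap
  · simp [blade_eq_zero_of_not_nodup hSn, iterate_map_zero]
  obtain ⟨C, hTC⟩ := (List.subperm_of_subset hSn hS).exists_perm_append
  obtain ⟨ε, hε, hSC⟩ := blade_perm (R := ℝ) (v := v) hTC.symm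
  set σ : ℝ := (-1) ^ (S.length * C.length)
  have hσ : σ * σ = 1 := by rw [← mul_pow, neg_one_mul, neg_neg, one_pow]
  have hCS : blade ℝ v T = (ε * σ) • blade ℝ v (C ++ S) := by
    rw [hSC, blade_append_comm, smul_smul]
  have hnodup : (S ++ C).Nodup := hTC.nodup_iff.1 hT
  obtain ⟨hstarR_S, hstarL_C⟩ :=
    contract_blade_of_eq_smul_blade_append hlc hrc hLC hRC hv hSC hnodup
  obtain ⟨hstarR_C, hstarL_S⟩ :=
    contract_blade_of_eq_smul_blade_append hlc hrc hLC hRC hv hCS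
      (List.nodup_append_comm.1 hnodup)
  have hginv_S : ginv^[T.length + 1] (blade ℝ v S) = σ • blade ℝ v S := by
    rw [iterate_apply_blade hginv, hTC.length_eq, List.length_append,
      show (S.length + C.length + 1) * S.length = S.length * C.length + S.length * (S.length + 1)
        by ring, pow_add, Even.neg_one_pow (Nat.even_mul_succ_self _), mul_one]
  refine ⟨?_, ?_, ?_, ?_⟩
  · rw [hstarR_S, map_smul, hstarL_C, smul_smul, hε, one_smul]
  · rw [hstarL_S, map_smul, LinearMap.smul_apply, hstarR_C, smul_smul,
      show ε * σ * (ε * σ) = 1 by linear_combination σ * σ * hε + hσ, one_smul]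
  · rw [hstarL_S, map_smul, hstarL_C, smul_smul, hginv_S]
    congr 1
    linear_combination σ * hε
  · rw [hstarR_S, map_smul, LinearMap.smul_apply, hstarR_C, smul_smul, hginv_S]
    congr 1
    linear_combination σ * hε

end Contraction

end ExteriorAlgebra

theorem stmt8_general {X : Type*} [NormedAddCommGroup X] [InnerProductSpace ℝ X]
    {n : ℕ} (e : OrthonormalBasis (Fin n) ℝ X)
    -- the grade involution: the unique algebra automorphism with `v̂ = -v` on vectors
    (ginv : ExteriorAlgebra ℝ X →ₐ[ℝ] ExteriorAlgebra ℝ X)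
    (hginv : ∀ v : X, ginv (ExteriorAlgebra.ι ℝ v) = - ExteriorAlgebra.ι ℝ v)
    -- the left contraction by a vector, characterized by its defining properties
    (lc : X → ExteriorAlgebra ℝ X →ₗ[ℝ] ExteriorAlgebra ℝ X)
    (hlc_one : ∀ v : X, lc v 1 = 0)
    (hlc_vec : ∀ v w : X, lc v (ExteriorAlgebra.ι ℝ w) = algebraMap ℝ (ExteriorAlgebra ℝ X) ⟪v, w⟫)
    (hlc_mul : ∀ (v : X) (M N : ExteriorAlgebra ℝ X),
      lc v (M * N) = lc v M * N + ginv M * lc v N)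
    -- the right contraction by a vector `N ↦ N⌞v`, characterized by its defining properties
    (rc : X → ExteriorAlgebra ℝ X →ₗ[ℝ] ExteriorAlgebra ℝ X)
    (hrc_one : ∀ v : X, rc v 1 = 0)
    (hrc_vec : ∀ v w : X, rc v (ExteriorAlgebra.ι ℝ w) = algebraMap ℝ (ExteriorAlgebra ℝ X) ⟪v, w⟫)
    (hrc_mul : ∀ (v : X) (M N : ExteriorAlgebra ℝ X),
      rc v (M * N) = M * rc v N + rc v M * ginv N)
    -- the left contraction `LC M N = M ⌟ N`, extended (bi)linearly in the contractor `M`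
    (LC : ExteriorAlgebra ℝ X →ₗ[ℝ] ExteriorAlgebra ℝ X →ₗ[ℝ] ExteriorAlgebra ℝ X)
    (hLC_one : ∀ N : ExteriorAlgebra ℝ X, LC 1 N = N)
    (hLC_mul : ∀ (v : X) (M N : ExteriorAlgebra ℝ X),
      LC (ExteriorAlgebra.ι ℝ v * M) N = LC M (lc v N))
    -- the right contraction `RC N M = N ⌞ M` (contractee `N`, contractor `M`),
    -- extended (bi)linearly in the contractor `M`
    (RC : ExteriorAlgebra ℝ X →ₗ[ℝ] ExteriorAlgebra ℝ X →ₗ[ℝ] ExteriorAlgebra ℝ X)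
    (hRC_one : ∀ N : ExteriorAlgebra ℝ X, RC N 1 = N)
    (hRC_mul : ∀ (v : X) (M N : ExteriorAlgebra ℝ X),
      RC N (ExteriorAlgebra.ι ℝ v * M) = rc v (RC N M))
    (M : ExteriorAlgebra ℝ X) :
    -- Ω = e₁ ∧ ⋯ ∧ e_n, ⋆_R M = M ⌟ Ω = LC M Ω, ⋆_L M = Ω ⌞ M = RC Ω M
    RC (expBlade fun i => e i) (LC M (expBlade fun i => e i)) = M ∧
    LC (RC (expBlade fun i => e i) M) (expBlade fun i => e i) = M ∧
    RC (expBlade fun i => e i) (RC (expBlade fun i => e i) M) = (⇑ginv)^[n + 1] M ∧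
    LC (LC M (expBlade fun i => e i)) (expBlade fun i => e i) = (⇑ginv)^[n + 1] M := by
  have hΩ : expBlade (fun i => e i) = ExteriorAlgebra.blade ℝ e (List.finRange n) := by
    simp [expBlade, ExteriorAlgebra.blade, List.ofFn_eq_map]
  have hstars (S : List (Fin n)) := ExteriorAlgebra.hodgeStars_apply_blade
    ⟨hlc_one, hlc_vec, hlc_mul⟩ ⟨hrc_one, hrc_vec, hrc_mul⟩ ⟨hLC_one, hLC_mul⟩ ⟨hRC_one, hRC_mul⟩
    e.orthonormal hginv (List.nodup_finRange n) (S := S) fun i _ => List.mem_finRange i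
  simp only [List.length_finRange, ← AlgHom.coe_pow] at hstars
  have hext (f g : Module.End ℝ (ExteriorAlgebra ℝ X)) := LinearMap.ext_on_range (f := f) (g := g)
    (ExteriorAlgebra.span_range_blade (by simpa using e.toBasis.span_eq))
  rw [hΩ, ← AlgHom.coe_pow]
  set Ω := ExteriorAlgebra.blade ℝ e (List.finRange n)
  exact ⟨LinearMap.congr_fun (hext (RC Ω ∘ₗ LC.flip Ω) 1 fun S => (hstars S).1) M,
    LinearMap.congr_fun (hext (LC.flip Ω ∘ₗ RC Ω) 1 fun S => (hstars S).2.1) M,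
    LinearMap.congr_fun (hext (RC Ω ∘ₗ RC Ω) (ginv ^ (n + 1)).toLinearMap
      fun S => (hstars S).2.2.1) M,
    LinearMap.congr_fun (hext (LC.flip Ω ∘ₗ LC.flip Ω) (ginv ^ (n + 1)).toLinearMap
      fun S => (hstars S).2.2.2) M⟩

/-- the left and right star operators are mutually inverse, and each squares
to the `(n+1)`-fold grade involution. -/
theorem stmt8 {X : Type*} [NormedAddCommGroup X] [InnerProductSpace ℝ X] [FiniteDimensional ℝ X]
    {n : ℕ} (e : OrthonormalBasis (Fin n) ℝ X)
    -- the grade involution: the unique algebra automorphism with `v̂ = -v` on vectors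
    (ginv : ExteriorAlgebra ℝ X →ₐ[ℝ] ExteriorAlgebra ℝ X)
    (hginv : ∀ v : X, ginv (ExteriorAlgebra.ι ℝ v) = - ExteriorAlgebra.ι ℝ v)
    -- the left contraction by a vector, characterized by its defining properties
    (lc : X → ExteriorAlgebra ℝ X →ₗ[ℝ] ExteriorAlgebra ℝ X)
    (hlc_one : ∀ v : X, lc v 1 = 0)
    (hlc_vec : ∀ v w : X, lc v (ExteriorAlgebra.ι ℝ w) = algebraMap ℝ (ExteriorAlgebra ℝ X) ⟪v, w⟫)
    (hlc_mul : ∀ (v : X) (M N : ExteriorAlgebra ℝ X),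
      lc v (M * N) = lc v M * N + ginv M * lc v N)
    -- the right contraction by a vector `N ↦ N⌞v`, characterized by its defining properties
    (rc : X → ExteriorAlgebra ℝ X →ₗ[ℝ] ExteriorAlgebra ℝ X)
    (hrc_one : ∀ v : X, rc v 1 = 0)
    (hrc_vec : ∀ v w : X, rc v (ExteriorAlgebra.ι ℝ w) = algebraMap ℝ (ExteriorAlgebra ℝ X) ⟪v, w⟫)
    (hrc_mul : ∀ (v : X) (M N : ExteriorAlgebra ℝ X),
      rc v (M * N) = M * rc v N + rc v M * ginv N)
    -- the left contraction `LC M N = M ⌟ N`, extended (bi)linearly in the contractor `M`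
    (LC : ExteriorAlgebra ℝ X →ₗ[ℝ] ExteriorAlgebra ℝ X →ₗ[ℝ] ExteriorAlgebra ℝ X)
    (hLC_one : ∀ N : ExteriorAlgebra ℝ X, LC 1 N = N)
    (hLC_vec : ∀ (v : X) (N : ExteriorAlgebra ℝ X), LC (ExteriorAlgebra.ι ℝ v) N = lc v N)
    (hLC_mul : ∀ (v : X) (M N : ExteriorAlgebra ℝ X),
      LC (ExteriorAlgebra.ι ℝ v * M) N = LC M (lc v N))
    -- the right contraction `RC N M = N ⌞ M` (contractee `N`, contractor `M`),
    -- extended (bi)linearly in the contractor `M`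
    (RC : ExteriorAlgebra ℝ X →ₗ[ℝ] ExteriorAlgebra ℝ X →ₗ[ℝ] ExteriorAlgebra ℝ X)
    (hRC_one : ∀ N : ExteriorAlgebra ℝ X, RC N 1 = N)
    (hRC_vec : ∀ (v : X) (N : ExteriorAlgebra ℝ X), RC N (ExteriorAlgebra.ι ℝ v) = rc v N)
    (hRC_mul : ∀ (v : X) (M N : ExteriorAlgebra ℝ X),
      RC N (ExteriorAlgebra.ι ℝ v * M) = rc v (RC N M))
    (M : ExteriorAlgebra ℝ X) :
    -- Ω = e₁ ∧ ⋯ ∧ e_n, ⋆_R M = M ⌟ Ω = LC M Ω, ⋆_L M = Ω ⌞ M = RC Ω M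
    RC (expBlade fun i => e i) (LC M (expBlade fun i => e i)) = M ∧
    LC (RC (expBlade fun i => e i) M) (expBlade fun i => e i) = M ∧
    RC (expBlade fun i => e i) (RC (expBlade fun i => e i) M) = (⇑ginv)^[n + 1] M ∧
    LC (LC M (expBlade fun i => e i)) (expBlade fun i => e i) = (⇑ginv)^[n + 1] M :=
  stmt8_general e ginv hginv lc hlc_one hlc_vec hlc_mul rc hrc_one hrc_vec hrc_mul LC hLC_one
    hLC_mul RC hRC_one hRC_mul M
end

section
/- Let (e₁,…,e_n) be an orthonormal basis of X, Ω = e₁∧⋯∧e_n, and ⋆_R M = M⌟Ω. Then for all M, N ∈ ⋀X: ⋆_R(M∧N) = N ⌟ (⋆_R M) and ⋆_R(M⌞N) = N ∧ (⋆_R M). -/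
open scoped RealInnerProductSpace

/-- Induction principle: a predicate closed under scalar multiplication, addition,
containing `1` and closed under left multiplication by vectors holds everywhere. -/
theorem expLeftInduction {X : Type*} [AddCommGroup X] [Module ℝ X]
    (p : ExteriorAlgebra ℝ X → Prop)
    (hsmul : ∀ (r : ℝ) m, p m → p (r • m))
    (hadd : ∀ a b, p a → p b → p (a + b))
    (h1 : p 1)
    (hstep : ∀ (v : X) m, p m → p (ExteriorAlgebra.ι ℝ v * m)) :
    ∀ x, p x := by
  intro x
  have key : ∀ y : ExteriorAlgebra ℝ X, ∀ m, p m → p (y * m) := by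
    intro y
    induction y using ExteriorAlgebra.induction with
    | algebraMap r =>
      intro m hm
      have : (algebraMap ℝ (ExteriorAlgebra ℝ X) r) * m = r • m := (Algebra.smul_def r m).symm
      rw [this]; exact hsmul r m hm
    | ι v => exact hstep v
    | mul a b ha hb => intro m hm; rw [mul_assoc]; exact ha _ (hb _ hm)
    | add a b ha hb => intro m hm; rw [add_mul]; exact hadd _ _ (ha _ hm) (hb _ hm)
  simpa using key x 1 h1

set_option maxHeartbeats 1000000 in
/-- the right star turns exterior products into left contractions and right
contractions into exterior products: `⋆_R(M∧N) = N ⌟ ⋆_R M` and `⋆_R(M⌞N) = N ∧ ⋆_R M`. -/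
theorem stmt9 {X : Type*} [NormedAddCommGroup X] [InnerProductSpace ℝ X] [FiniteDimensional ℝ X]
    {n : ℕ} (e : OrthonormalBasis (Fin n) ℝ X)
    -- the grade involution: the unique algebra automorphism with `v̂ = -v` on vectors
    (ginv : ExteriorAlgebra ℝ X →ₐ[ℝ] ExteriorAlgebra ℝ X)
    (hginv : ∀ v : X, ginv (ExteriorAlgebra.ι ℝ v) = - ExteriorAlgebra.ι ℝ v)
    -- the left contraction by a vector, characterized by its defining properties
    (lc : X → ExteriorAlgebra ℝ X →ₗ[ℝ] ExteriorAlgebra ℝ X)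
    (hlc_one : ∀ v : X, lc v 1 = 0)
    (hlc_vec : ∀ v w : X, lc v (ExteriorAlgebra.ι ℝ w) = algebraMap ℝ (ExteriorAlgebra ℝ X) ⟪v, w⟫)
    (hlc_mul : ∀ (v : X) (M N : ExteriorAlgebra ℝ X),
      lc v (M * N) = lc v M * N + ginv M * lc v N)
    -- the right contraction by a vector `N ↦ N⌞v`, characterized by its defining properties
    (rc : X → ExteriorAlgebra ℝ X →ₗ[ℝ] ExteriorAlgebra ℝ X)
    (hrc_one : ∀ v : X, rc v 1 = 0)
    (hrc_vec : ∀ v w : X, rc v (ExteriorAlgebra.ι ℝ w) = algebraMap ℝ (ExteriorAlgebra ℝ X) ⟪v, w⟫)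
    (hrc_mul : ∀ (v : X) (M N : ExteriorAlgebra ℝ X),
      rc v (M * N) = M * rc v N + rc v M * ginv N)
    -- the left contraction `LC M N = M ⌟ N`, extended (bi)linearly in the contractor `M`
    (LC : ExteriorAlgebra ℝ X →ₗ[ℝ] ExteriorAlgebra ℝ X →ₗ[ℝ] ExteriorAlgebra ℝ X)
    (hLC_one : ∀ N : ExteriorAlgebra ℝ X, LC 1 N = N)
    (hLC_vec : ∀ (v : X) (N : ExteriorAlgebra ℝ X), LC (ExteriorAlgebra.ι ℝ v) N = lc v N)
    (hLC_mul : ∀ (v : X) (M N : ExteriorAlgebra ℝ X),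
      LC (ExteriorAlgebra.ι ℝ v * M) N = LC M (lc v N))
    -- the right contraction `RC N M = N ⌞ M` (contractee `N`, contractor `M`),
    -- extended (bi)linearly in the contractor `M`
    (RC : ExteriorAlgebra ℝ X →ₗ[ℝ] ExteriorAlgebra ℝ X →ₗ[ℝ] ExteriorAlgebra ℝ X)
    (hRC_one : ∀ N : ExteriorAlgebra ℝ X, RC N 1 = N)
    (hRC_vec : ∀ (v : X) (N : ExteriorAlgebra ℝ X), RC N (ExteriorAlgebra.ι ℝ v) = rc v N)
    (hRC_mul : ∀ (v : X) (M N : ExteriorAlgebra ℝ X),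
      RC N (ExteriorAlgebra.ι ℝ v * M) = rc v (RC N M))
    (M N : ExteriorAlgebra ℝ X) :
    -- Ω = e₁ ∧ ⋯ ∧ e_n, ⋆_R M = M ⌟ Ω = LC M Ω
    LC (M * N) (expBlade fun i => e i) = LC N (LC M (expBlade fun i => e i)) ∧
    LC (RC M N) (expBlade fun i => e i) = N * LC M (expBlade fun i => e i) := by
  obtain ⟨Ω, hΩ⟩ : ∃ Ω : ExteriorAlgebra ℝ X, Ω = expBlade fun i => e i := ⟨_, rfl⟩
  rw [← hΩ]
  -- Lemma A: LC turns left factors into iterated contraction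
  have hA : ∀ M₀ N₀ P₀ : ExteriorAlgebra ℝ X, LC (M₀ * N₀) P₀ = LC N₀ (LC M₀ P₀) := by
    intro M₀
    refine expLeftInduction (fun M₀ => ∀ N₀ P₀, LC (M₀ * N₀) P₀ = LC N₀ (LC M₀ P₀))
      ?_ ?_ ?_ ?_ M₀
    · intro r m hm N₀ P₀
      simp only [smul_mul_assoc, map_smul, LinearMap.smul_apply, hm]
    · intro a b ha hb N₀ P₀
      simp only [add_mul, map_add, LinearMap.add_apply, ha, hb]
    · intro N₀ P₀
      rw [one_mul, hLC_one]
    · intro v m hm N₀ P₀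
      rw [mul_assoc, hLC_mul, hm, ← hLC_mul]
  -- Lemma C: any vector wedged with the top form vanishes
  have hC : ∀ v : X, ExteriorAlgebra.ι ℝ v * Ω = 0 := by
    intro v
    have hv : (∑ i, ⟪e i, v⟫ • e i) = v := e.sum_repr' v
    have hι : ExteriorAlgebra.ι ℝ v = ∑ i, ⟪e i, v⟫ • ExteriorAlgebra.ι ℝ (e i) := by
      conv_lhs => rw [← hv]
      rw [map_sum]
      exact Finset.sum_congr rfl fun i _ => map_smul _ _ _
    rw [hι, Finset.sum_mul]
    refine Finset.sum_eq_zero fun i _ => ?_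
    rw [smul_mul_assoc, hΩ, expBlade,
      ExteriorAlgebra.ι_mul_prod_list (fun j => e j) i, smul_zero]
  -- Lemma F: the key interchange identity for the right contraction by a vector
  have hF : ∀ (M₀ : ExteriorAlgebra ℝ X) (u : X) (R : ExteriorAlgebra ℝ X),
      LC (rc u M₀) R =
        ExteriorAlgebra.ι ℝ u * LC M₀ R - LC (ginv M₀) (ExteriorAlgebra.ι ℝ u * R) := by
    intro M₀
    refine expLeftInduction (fun M₀ => ∀ u R, LC (rc u M₀) R =
        ExteriorAlgebra.ι ℝ u * LC M₀ R - LC (ginv M₀) (ExteriorAlgebra.ι ℝ u * R))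
      ?_ ?_ ?_ ?_ M₀
    · intro r m hm u R
      simp only [map_smul, LinearMap.smul_apply, hm, mul_smul_comm, smul_sub]
    · intro a b ha hb u R
      simp only [map_add, LinearMap.add_apply, ha, hb, mul_add]
      abel
    · intro u R
      have g1 : ginv (1 : ExteriorAlgebra ℝ X) = 1 := map_one ginv
      rw [hrc_one, map_zero, LinearMap.zero_apply, g1, hLC_one, hLC_one, sub_self]
    · intro v m hm u R
      have h1 : rc u (ExteriorAlgebra.ι ℝ v * m)
          = ExteriorAlgebra.ι ℝ v * rc u m + ⟪u, v⟫ • ginv m := by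
        rw [hrc_mul, hrc_vec, Algebra.smul_def]
      have h2 : lc v (ExteriorAlgebra.ι ℝ u * R)
          = ⟪v, u⟫ • R - ExteriorAlgebra.ι ℝ u * lc v R := by
        rw [hlc_mul, hlc_vec, hginv, Algebra.smul_def, neg_mul, sub_eq_add_neg]
      have h3 : ginv (ExteriorAlgebra.ι ℝ v * m) = -(ExteriorAlgebra.ι ℝ v * ginv m) := by
        rw [map_mul, hginv, neg_mul]
      have hR : LC (ginv (ExteriorAlgebra.ι ℝ v * m)) (ExteriorAlgebra.ι ℝ u * R)
          = LC (ginv m) (ExteriorAlgebra.ι ℝ u * lc v R) - ⟪v, u⟫ • LC (ginv m) R := by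
        rw [h3, map_neg, LinearMap.neg_apply, hLC_mul, h2, map_sub, map_smul, neg_sub]
      rw [h1, map_add, LinearMap.add_apply, map_smul, LinearMap.smul_apply,
        hLC_mul, hm, hR, hLC_mul, real_inner_comm u v]
      abel
  -- Statement 2
  have hG : ∀ N₀ M₀ : ExteriorAlgebra ℝ X, LC (RC M₀ N₀) Ω = N₀ * LC M₀ Ω := by
    intro N₀
    refine expLeftInduction (fun N₀ => ∀ M₀, LC (RC M₀ N₀) Ω = N₀ * LC M₀ Ω) ?_ ?_ ?_ ?_ N₀
    · intro r m hm M₀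
      rw [map_smul, map_smul, LinearMap.smul_apply, hm M₀, smul_mul_assoc]
    · intro a b ha hb M₀
      rw [map_add, map_add, LinearMap.add_apply, ha M₀, hb M₀, add_mul]
    · intro M₀
      rw [hRC_one, one_mul]
    · intro v m hm M₀
      rw [hRC_mul v m M₀, hF (RC M₀ m) v Ω, hC v, map_zero (LC (ginv (RC M₀ m))), sub_zero,
        hm M₀, mul_assoc]
  exact ⟨hA M N Ω, hG N M⟩
end

section
/- For every M ∈ ⋀X, the outer space of M is the orthogonal complement of the annihilator of M under contraction: osp M = ({v ∈ X : v⌟M = 0})^⊥. -/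
/-!
If `M` lies in the subalgebra generated by a subspace `V`, then contraction by any `v ⊥ V`
kills `M`, because `v⌟` is a graded derivation vanishing on `V`; hence `Vᗮ` annihilates `M`
and the orthogonal complement of the annihilator lies in `V`.

Conversely, let `v ≠ 0` with `v⌟M = 0`, and let `P` be the orthogonal projection onto `vᗮ`.
Every multivector splits as `M = (⋀P) M + v ∧ C`, and `(⋀P) M` lies in the subalgebra generated
by `vᗮ`, so `v⌟(v ∧ C) = 0`. Since `v⌟(v ∧ C) = |v|² C - v ∧ (v⌟C)`, wedging with `v` gives
`|v|² (v ∧ C) = 0`, so `M = (⋀P) M` and the outer space of `M` lies in `vᗮ`.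
-/

open scoped RealInnerProductSpace

/-- The inner space of a multivector `M`: the subspace `{v ∈ X : v ∧ M = 0}`. -/
noncomputable def innerSpace {X : Type*} [AddCommGroup X] [Module ℝ X]
    (M : ExteriorAlgebra ℝ X) : Submodule ℝ X :=
  LinearMap.ker ((LinearMap.mulRight ℝ M).comp (ExteriorAlgebra.ι ℝ))

/-- The outer space of a multivector `M`: the intersection of all subspaces `V ⊆ X` such
that `M` lies in the subalgebra of the exterior algebra generated by `V`. -/
noncomputable def outerSpace {X : Type*} [AddCommGroup X] [Module ℝ X]
    (M : ExteriorAlgebra ℝ X) : Submodule ℝ X :=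
  sInf {V : Submodule ℝ X |
    M ∈ Algebra.adjoin ℝ (⇑(ExteriorAlgebra.ι ℝ (M := X)) '' (V : Set X))}

-- `ExteriorAlgebra R M` is `CliffordAlgebra (0 : QuadraticForm R M)`, so
-- `CliffordAlgebra.involute` is its grade involution.
namespace ExteriorAlgebra

variable {R M N : Type*} [CommRing R] [AddCommGroup M] [Module R M] [AddCommGroup N]
  [Module R N]

theorem mul_ι_eq_ι_mul_involute (z : ExteriorAlgebra R M) (v : M) :
    z * ι R v = ι R v * CliffordAlgebra.involute z := by
  induction z using ExteriorAlgebra.induction with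
  | algebraMap r => rw [AlgHom.commutes, Algebra.commutes]
  | ι w =>
    rw [CliffordAlgebra.involute_ι, mul_neg, eq_neg_iff_add_eq_zero]
    exact ι_add_mul_swap w v
  | mul a b ha hb => rw [mul_assoc, hb, ← mul_assoc, ha, map_mul, mul_assoc]
  | add a b ha hb => rw [add_mul, ha, hb, map_add, mul_add]

theorem map_mem_adjoin_range (f : M →ₗ[R] N) (z : ExteriorAlgebra R M) :
    map f z ∈ Algebra.adjoin R (ι R '' (LinearMap.range f : Set N)) := by
  induction z using ExteriorAlgebra.induction with
  | algebraMap r => rw [AlgHom.commutes]; exact Subalgebra.algebraMap_mem _ r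
  | ι w => rw [map_apply_ι]; exact Algebra.subset_adjoin ⟨f w, ⟨w, rfl⟩, rfl⟩
  | mul a b ha hb => rw [map_mul]; exact mul_mem ha hb
  | add a b ha hb => rw [map_add]; exact add_mem ha hb

theorem exists_eq_map_add_ι_mul {f : M →ₗ[R] M} {v : M} (hf : ∀ x, x - f x ∈ R ∙ v)
    (z : ExteriorAlgebra R M) : ∃ c, z = map f z + ι R v * c := by
  induction z using ExteriorAlgebra.induction with
  | algebraMap r => exact ⟨0, by rw [AlgHom.commutes, mul_zero, add_zero]⟩
  | ι w =>
    obtain ⟨a, ha⟩ := Submodule.mem_span_singleton.mp (hf w)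
    refine ⟨algebraMap R _ a, ?_⟩
    rw [map_apply_ι, ← Algebra.commutes, ← Algebra.smul_def, ← map_smul, ha, ← map_add,
      add_sub_cancel]
  | mul a b ha hb =>
    obtain ⟨c, hc⟩ := ha
    obtain ⟨d, hd⟩ := hb
    refine ⟨CliffordAlgebra.involute (map f a) * d + c * b, ?_⟩
    calc a * b = (map f a + ι R v * c) * b := by rw [← hc]
      _ = map f a * (map f b + ι R v * d) + ι R v * c * b := by rw [add_mul, ← hd]
      _ = map f (a * b) + ι R v * (CliffordAlgebra.involute (map f a) * d + c * b) := by
        rw [mul_add, ← mul_assoc (map f a), mul_ι_eq_ι_mul_involute, map_mul]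
        noncomm_ring
  | add a b ha hb =>
    obtain ⟨c, hc⟩ := ha
    obtain ⟨d, hd⟩ := hb
    exact ⟨c + d, by rw [map_add, mul_add, add_add_add_comm, ← hc, ← hd]⟩

theorem eq_involute {f : ExteriorAlgebra R M →ₐ[R] ExteriorAlgebra R M}
    (hf : ∀ v, f (ι R v) = -ι R v) : f = CliffordAlgebra.involute :=
  hom_ext <| LinearMap.ext fun v => by
    simp only [LinearMap.comp_apply, AlgHom.toLinearMap_apply, hf, CliffordAlgebra.involute_ι]

end ExteriorAlgebra

open ExteriorAlgebra

structure IsLeftContraction_s13 {X : Type*} [NormedAddCommGroup X] [InnerProductSpace ℝ X]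
    (lc : X → ExteriorAlgebra ℝ X →ₗ[ℝ] ExteriorAlgebra ℝ X) : Prop where
  apply_one (v : X) : lc v 1 = 0
  apply_ι (v w : X) : lc v (ι ℝ w) = algebraMap ℝ _ ⟪v, w⟫
  apply_mul (v : X) (M N : ExteriorAlgebra ℝ X) :
    lc v (M * N) = lc v M * N + CliffordAlgebra.involute M * lc v N

namespace IsLeftContraction_s13

variable {X : Type*} [NormedAddCommGroup X] [InnerProductSpace ℝ X]
  {lc : X → ExteriorAlgebra ℝ X →ₗ[ℝ] ExteriorAlgebra ℝ X}

theorem apply_eq_zero_of_mem_adjoin (h : IsLeftContraction_s13 lc) {v : X} {W : Submodule ℝ X}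
    (hv : v ∈ Wᗮ) {z : ExteriorAlgebra ℝ X}
    (hz : z ∈ Algebra.adjoin ℝ (ι ℝ '' (W : Set X))) :
    lc v z = 0 := by
  induction hz using Algebra.adjoin_induction with
  | mem x hx =>
    obtain ⟨w, hw, rfl⟩ := hx
    rw [h.apply_ι, (Submodule.mem_orthogonal' W v).mp hv w hw, map_zero]
  | algebraMap r => rw [Algebra.algebraMap_eq_smul_one, map_smul, h.apply_one, smul_zero]
  | add x y _ _ hx hy => rw [map_add, hx, hy, add_zero]
  | mul x y _ _ hx hy => rw [h.apply_mul, hx, hy, zero_mul, mul_zero, add_zero]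

theorem apply_ι_mul (h : IsLeftContraction_s13 lc) (v : X) (c : ExteriorAlgebra ℝ X) :
    lc v (ι ℝ v * c) = ⟪v, v⟫ • c - ι ℝ v * lc v c := by
  rw [h.apply_mul, h.apply_ι, CliffordAlgebra.involute_ι, neg_mul, ← Algebra.smul_def,
    sub_eq_add_neg]

theorem ι_mul_eq_zero_of_apply_ι_mul_eq_zero (h : IsLeftContraction_s13 lc) {v : X} (hv : v ≠ 0)
    {c : ExteriorAlgebra ℝ X} (hc : lc v (ι ℝ v * c) = 0) : ι ℝ v * c = 0 := by
  have : ⟪v, v⟫ • (ι ℝ v * c) = 0 :=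
    calc ⟪v, v⟫ • (ι ℝ v * c) = ι ℝ v * (⟪v, v⟫ • c - ι ℝ v * lc v c) := by
          rw [mul_sub, ← mul_assoc, ι_sq_zero, zero_mul, sub_zero, mul_smul_comm]
      _ = 0 := by rw [← h.apply_ι_mul, hc, mul_zero]
  exact (smul_eq_zero.mp this).resolve_left (inner_self_ne_zero.mpr hv)

theorem mem_adjoin_orthogonal_of_apply_eq_zero (h : IsLeftContraction_s13 lc) {v : X} (hv : v ≠ 0)
    {z : ExteriorAlgebra ℝ X} (hz : lc v z = 0) :
    z ∈ Algebra.adjoin ℝ (ι ℝ '' ((ℝ ∙ v)ᗮ : Set X)) := by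
  let f : X →ₗ[ℝ] X := (ℝ ∙ v)ᗮ.starProjection
  have hmap : ∀ y, map f y ∈ Algebra.adjoin ℝ (ι ℝ '' ((ℝ ∙ v)ᗮ : Set X)) := fun y =>
    Algebra.adjoin_mono (Set.image_mono <| by
      rintro _ ⟨x, rfl⟩
      exact (ℝ ∙ v)ᗮ.starProjection_apply_mem x) (map_mem_adjoin_range f y)
  have hf : ∀ x, x - f x ∈ ℝ ∙ v := fun x => by
    simp [f, (ℝ ∙ v).starProjection_apply_mem x]
  obtain ⟨c, hc⟩ := exists_eq_map_add_ι_mul hf z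
  have hvc : lc v (ι ℝ v * c) = 0 := by
    have hv' : v ∈ ((ℝ ∙ v)ᗮ)ᗮ :=
      Submodule.le_orthogonal_orthogonal _ (Submodule.mem_span_singleton_self v)
    rwa [hc, map_add, h.apply_eq_zero_of_mem_adjoin hv' (hmap z), zero_add] at hz
  rw [hc, h.ι_mul_eq_zero_of_apply_ι_mul_eq_zero hv hvc, add_zero]
  exact hmap z

theorem outerSpace_le_orthogonal_span (h : IsLeftContraction_s13 lc) (M : ExteriorAlgebra ℝ X) :
    outerSpace M ≤ (Submodule.span ℝ {v : X | lc v M = 0})ᗮ := by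
  rw [← Submodule.isOrtho_iff_le, Submodule.isOrtho_comm, Submodule.isOrtho_iff_le,
    Submodule.span_le]
  intro v hv
  rcases eq_or_ne v 0 with rfl | hv0
  · exact zero_mem _
  · have hle : outerSpace M ≤ (ℝ ∙ v)ᗮ :=
      sInf_le (h.mem_adjoin_orthogonal_of_apply_eq_zero hv0 hv)
    exact Submodule.IsOrtho.symm hle (Submodule.mem_span_singleton_self v)

theorem orthogonal_span_le_outerSpace [FiniteDimensional ℝ X] (h : IsLeftContraction_s13 lc)
    (M : ExteriorAlgebra ℝ X) :
    (Submodule.span ℝ {v : X | lc v M = 0})ᗮ ≤ outerSpace M :=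
  le_sInf fun V hV => by
    have hVann : Vᗮ ≤ Submodule.span ℝ {v : X | lc v M = 0} := fun v hv =>
      Submodule.subset_span (h.apply_eq_zero_of_mem_adjoin hv hV)
    simpa only [Submodule.orthogonal_orthogonal] using Submodule.orthogonal_le hVann

end IsLeftContraction_s13

/-- the outer space of `M` is the orthogonal complement of the annihilator
of `M` under left contraction by vectors. -/
theorem stmt13 {X : Type*} [NormedAddCommGroup X] [InnerProductSpace ℝ X]
    [FiniteDimensional ℝ X]
    -- the grade involution: the unique algebra automorphism with `v̂ = -v` on vectors
    (ginv : ExteriorAlgebra ℝ X →ₐ[ℝ] ExteriorAlgebra ℝ X)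
    (hginv : ∀ v : X, ginv (ExteriorAlgebra.ι ℝ v) = - ExteriorAlgebra.ι ℝ v)
    -- the left contraction by a vector, characterized by its defining properties
    (lc : X → ExteriorAlgebra ℝ X →ₗ[ℝ] ExteriorAlgebra ℝ X)
    (hlc_one : ∀ v : X, lc v 1 = 0)
    (hlc_vec : ∀ v w : X, lc v (ExteriorAlgebra.ι ℝ w) = algebraMap ℝ (ExteriorAlgebra ℝ X) ⟪v, w⟫)
    (hlc_mul : ∀ (v : X) (M N : ExteriorAlgebra ℝ X),
      lc v (M * N) = lc v M * N + ginv M * lc v N)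
    (M : ExteriorAlgebra ℝ X) :
    outerSpace M = (Submodule.span ℝ {v : X | lc v M = 0})ᗮ := by
  obtain rfl := eq_involute hginv
  have h : IsLeftContraction_s13 lc := ⟨hlc_one, hlc_vec, hlc_mul⟩
  exact le_antisymm (h.outerSpace_le_orthogonal_span M) (h.orthogonal_span_le_outerSpace M)
end

section
/- Let p ≥ 1 and H ∈ ⋀^pX be homogeneous of degree p. Then H is a blade (i.e. H = v₁∧⋯∧v_p for some vectors v_i, or H = 0) if and only if (F⌟H)∧H = 0 for every F ∈ ⋀^{p−1}X. -/
open scoped RealInnerProductSpace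

/-!
Forward direction: for a blade `H = v₁ ∧ ⋯ ∧ v_p` and a `(p-1)`-vector `F`, the contraction
`F ⌟ H` is a vector `u`. Contraction by a vector `z` (anti)commutes with `F ⌟ ·`, and `z ⌟ H = 0`
when `z ⊥ vᵢ` for all `i`; hence `⟪z, u⟫ = 0` for all such `z`, so `u ∈ span vᵢ` and `u ∧ H = 0`.

Backward direction: let `W` be spanned by the vectors `F ⌟ H`. By hypothesis `w ∧ H = 0` for
`w ∈ W`, and the same commutation gives `F ⌟ (z ⌟ H) = 0` for all `F` when `z ⊥ W`, so
`z ⌟ H = 0` by nondegeneracy of the contraction pairing. In an orthonormal basis adapted to `W`,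
the number operator `∑ eᵢ ∧ (eᵢ ⌟ ·)`, which is multiplication by `p` on `p`-vectors, therefore
counts the basis vectors in `W`: there are `p` of them. Dividing `H` successively by these
`e₁, …, e_p` gives `H = e₁ ∧ ⋯ ∧ e_p ∧ G`, and comparing degrees shows that `G` is a scalar.
-/

open ExteriorAlgebra

namespace ExteriorAlgebra

section Graded

variable {R M : Type*} [CommRing R] [AddCommGroup M] [Module R M]

theorem exists_algebraMap_eq_of_mem_exteriorPower_zero {x : ExteriorAlgebra R M}
    (hx : x ∈ ⋀[R]^0 M) : ∃ r : R, algebraMap R _ r = x :=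
  Submodule.mem_one.mp (by simpa only [pow_zero] using hx)

theorem ι_mul_mem_exteriorPower (m : M) {q : ℕ} {x : ExteriorAlgebra R M}
    (hx : x ∈ ⋀[R]^q M) : ι R m * x ∈ ⋀[R]^(q + 1) M := by
  rw [add_comm]
  exact SetLike.mul_mem_graded (by simpa only [pow_one] using LinearMap.mem_range_self _ m) hx

theorem list_prod_map_ι_mem_exteriorPower (l : List M) :
    (l.map (ι R)).prod ∈ ⋀[R]^l.length M := by
  induction l with
  | nil => exact SetLike.one_mem_graded _
  | cons a t ih => exact ι_mul_mem_exteriorPower a ih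

theorem ι_mul_ι_eq_neg (m n : M) : ι R m * ι R n = -(ι R n * ι R m) :=
  eq_neg_of_add_eq_zero_left (ι_add_mul_swap m n)

theorem exists_eq_ι_of_mem_exteriorPower_one {x : ExteriorAlgebra R M} (hx : x ∈ ⋀[R]^1 M) :
    ∃ m : M, x = ι R m :=
  (LinearMap.mem_range.mp (by simpa only [pow_one] using hx)).imp fun _ => Eq.symm

theorem ι_mul_eq_neg_one_pow_smul_mul (m : M) {k : ℕ} {x : ExteriorAlgebra R M}
    (hx : x ∈ ⋀[R]^k M) : ι R m * x = (-1 : R) ^ k • (x * ι R m) := by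
  induction hx using Submodule.pow_induction_on_left' with
  | algebraMap r => rw [pow_zero, one_smul, Algebra.commutes]
  | add x y i _ _ ihx ihy => rw [mul_add, add_mul, ihx, ihy, smul_add]
  | mem_mul _ hn i x _ ih =>
    obtain ⟨n, rfl⟩ := hn
    rw [← mul_assoc, ι_mul_ι_eq_neg, neg_mul, mul_assoc, ih,
      mul_smul_comm, ← mul_assoc, pow_succ, mul_neg_one, neg_smul]

theorem exists_eq_smul_of_eq_mul {k : ℕ} {b g h : ExteriorAlgebra R M} (hb : b ∈ ⋀[R]^k M)
    (hh : h ∈ ⋀[R]^k M) (hbg : h = b * g) : ∃ r : R, h = r • b := by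
  let 𝒜 : ℕ → Submodule R (ExteriorAlgebra R M) := fun i => ⋀[R]^i M
  obtain ⟨r, hr⟩ := exists_algebraMap_eq_of_mem_exteriorPower_zero
    (DirectSum.decompose 𝒜 g 0).2
  refine ⟨r, ?_⟩
  calc h = DirectSum.decompose 𝒜 (b * g) k := by
        rw [← hbg, DirectSum.decompose_of_mem_same 𝒜 hh]
    _ = r • b := by
        rw [DirectSum.coe_decompose_mul_of_left_mem_of_le 𝒜 hb le_rfl, Nat.sub_self, ← hr,
          ← Algebra.commutes, Algebra.smul_def]

end Graded

variable {X : Type*} [AddCommGroup X] [Module ℝ X]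

theorem expBlade_eq_prod_map_ofFn {k : ℕ} (v : Fin k → X) :
    expBlade v = ((List.ofFn v).map (ι ℝ)).prod := by
  rw [expBlade, List.map_ofFn]
  rfl

theorem expBlade_mem_exteriorPower {k : ℕ} (v : Fin k → X) : expBlade v ∈ ⋀[ℝ]^k X :=
  ιMulti_range ℝ k ⟨v, ιMulti_apply v⟩

theorem expBlade_eq_list_prod (l : List X) :
    expBlade l.get = (l.map (ι ℝ)).prod := by
  rw [expBlade_eq_prod_map_ofFn, List.ofFn_get]

theorem exists_expBlade_eq_smul_list_prod (r : ℝ) {l : List X} (hl : l ≠ []) :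
    ∃ v : Fin l.length → X, expBlade v = r • (l.map (ι ℝ)).prod := by
  obtain ⟨a, t, rfl⟩ := List.exists_cons_of_ne_nil hl
  refine ⟨(r • a :: t).get, ?_⟩
  refine (expBlade_eq_list_prod (r • a :: t)).trans ?_
  simp only [List.map_cons, List.prod_cons, map_smul, smul_mul_assoc]

theorem ι_mul_expBlade_of_mem_span {k : ℕ} (v : Fin k → X) {y : X}
    (hy : y ∈ Submodule.span ℝ (Set.range v)) : ι ℝ y * expBlade v = 0 := by
  suffices Submodule.span ℝ (Set.range v) ≤
      LinearMap.ker (LinearMap.mulRight ℝ (expBlade v) ∘ₗ ι ℝ) from this hy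
  rw [Submodule.span_le]
  rintro _ ⟨i, rfl⟩
  exact ι_mul_prod_list v i

end ExteriorAlgebra

section Contraction

variable {X : Type*} [NormedAddCommGroup X] [InnerProductSpace ℝ X]

theorem exists_orthonormalBasis_forall_mem_or_mem_orthogonal [FiniteDimensional ℝ X]
    (W : Submodule ℝ X) : ∃ (u : Finset X) (b : OrthonormalBasis u ℝ X),
      ⇑b = ((↑) : u → X) ∧ ∀ x ∈ u, x ∈ W ∨ x ∈ Wᗮ := by
  let c := stdOrthonormalBasis ℝ W
  have hc : Orthonormal ℝ (W.subtype ∘ c) := c.orthonormal.comp_linearIsometry W.subtypeₗᵢ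
  obtain ⟨u, b, hcu, hb⟩ := hc.toSubtypeRange.exists_orthonormalBasis_extension
  refine ⟨u, b, hb, fun x hx => or_iff_not_imp_left.mpr fun hxW => ?_⟩
  have hspan : Submodule.span ℝ (Set.range (W.subtype ∘ c)) = W := by
    rw [Set.range_comp, Submodule.span_image, ← c.coe_toBasis, c.toBasis.span_eq,
      Submodule.map_subtype_top]
  have hu : Orthonormal ℝ ((↑) : u → X) := hb ▸ b.orthonormal
  rw [← hspan]
  refine (Submodule.isOrtho_span.mpr ?_).symm (Submodule.mem_span_singleton_self x)
  rintro _ ⟨i, rfl⟩ y hy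
  rw [Set.mem_singleton_iff.mp hy]
  have hne : W.subtype (c i) ≠ x := fun h => hxW (h ▸ (c i).2)
  exact hu.2 (show (⟨_, hcu ⟨i, rfl⟩⟩ : u) ≠ ⟨x, hx⟩ by simpa using hne)

structure IsVectorContraction (ginv : ExteriorAlgebra ℝ X →ₐ[ℝ] ExteriorAlgebra ℝ X)
    (lc : X → ExteriorAlgebra ℝ X →ₗ[ℝ] ExteriorAlgebra ℝ X) : Prop where
  ginv_ι : ∀ v : X, ginv (ι ℝ v) = -ι ℝ v
  apply_one : ∀ v : X, lc v 1 = 0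
  apply_ι : ∀ v w : X, lc v (ι ℝ w) = algebraMap ℝ _ ⟪v, w⟫
  apply_mul : ∀ (v : X) (M N : ExteriorAlgebra ℝ X), lc v (M * N) = lc v M * N + ginv M * lc v N

structure IsContractionExtension (lc : X → ExteriorAlgebra ℝ X →ₗ[ℝ] ExteriorAlgebra ℝ X)
    (LC : ExteriorAlgebra ℝ X →ₗ[ℝ] ExteriorAlgebra ℝ X →ₗ[ℝ] ExteriorAlgebra ℝ X) : Prop where
  one_left : ∀ N, LC 1 N = N
  ι_left : ∀ (v : X) N, LC (ι ℝ v) N = lc v N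
  ι_mul_left : ∀ (v : X) M N, LC (ι ℝ v * M) N = LC M (lc v N)

namespace IsVectorContraction

variable {ginv : ExteriorAlgebra ℝ X →ₐ[ℝ] ExteriorAlgebra ℝ X}
  {lc : X → ExteriorAlgebra ℝ X →ₗ[ℝ] ExteriorAlgebra ℝ X} (h : IsVectorContraction ginv lc)
include h

theorem apply_algebraMap (v : X) (r : ℝ) : lc v (algebraMap ℝ _ r) = 0 := by
  rw [Algebra.algebraMap_eq_smul_one, map_smul, h.apply_one, smul_zero]

theorem apply_ι_mul (v w : X) (M : ExteriorAlgebra ℝ X) :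
    lc v (ι ℝ w * M) = ⟪v, w⟫ • M - ι ℝ w * lc v M := by
  rw [h.apply_mul, h.apply_ι, h.ginv_ι, ← Algebra.smul_def, neg_mul, sub_eq_add_neg]

theorem apply_mem_exteriorPower (v : X) {q : ℕ} {M : ExteriorAlgebra ℝ X}
    (hM : M ∈ ⋀[ℝ]^q X) : lc v M ∈ ⋀[ℝ]^(q - 1) X := by
  induction hM using Submodule.pow_induction_on_left' with
  | algebraMap r => rw [h.apply_algebraMap]; exact zero_mem _
  | add x y i _ _ ihx ihy => rw [map_add]; exact add_mem ihx ihy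
  | mem_mul _ hm i x hx ih =>
    obtain ⟨w, rfl⟩ := hm
    rw [h.apply_ι_mul]
    refine sub_mem (Submodule.smul_mem _ _ (by simpa using hx)) ?_
    rcases i with _ | j
    · obtain ⟨r, rfl⟩ := exists_algebraMap_eq_of_mem_exteriorPower_zero hx
      rw [h.apply_algebraMap, mul_zero]
      exact zero_mem _
    · exact ι_mul_mem_exteriorPower w ih

theorem ginv_apply_of_mem_exteriorPower {k : ℕ} {M : ExteriorAlgebra ℝ X}
    (hM : M ∈ ⋀[ℝ]^k X) : ginv M = (-1 : ℝ) ^ k • M := by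
  induction hM using Submodule.pow_induction_on_left' with
  | algebraMap r => rw [AlgHom.commutes, pow_zero, one_smul]
  | add x y i _ _ ihx ihy => rw [map_add, ihx, ihy, smul_add]
  | mem_mul _ hm i x _ ih =>
    obtain ⟨w, rfl⟩ := hm
    rw [map_mul, h.ginv_ι, ih, neg_mul, mul_smul_comm, pow_succ', mul_smul, neg_one_smul]

theorem apply_list_prod_of_forall_inner_eq_zero (u : X) {l : List X}
    (hl : ∀ w ∈ l, ⟪u, w⟫ = 0) : lc u (l.map (ι ℝ)).prod = 0 := by
  induction l with
  | nil => exact h.apply_one u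
  | cons a t ih =>
    rw [List.map_cons, List.prod_cons, h.apply_ι_mul, hl a List.mem_cons_self, zero_smul,
      ih fun w hw => hl w (List.mem_cons_of_mem a hw), mul_zero, sub_zero]

theorem ι_mul_apply_of_ι_mul_eq_zero {u : X} (hu : ‖u‖ = 1) {M : ExteriorAlgebra ℝ X}
    (hM : ι ℝ u * M = 0) : ι ℝ u * lc u M = M := by
  have := h.apply_ι_mul u u M
  rw [hM, map_zero, real_inner_self_eq_norm_sq, hu, one_pow, one_smul, eq_comm,
    sub_eq_zero] at this
  exact this.symm

theorem sum_ι_mul_apply {ι' : Type*} [Fintype ι'] (b : OrthonormalBasis ι' ℝ X) {q : ℕ}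
    {M : ExteriorAlgebra ℝ X} (hM : M ∈ ⋀[ℝ]^q X) : ∑ i, ι ℝ (b i) * lc (b i) M = (q : ℝ) • M := by
  induction hM using Submodule.pow_induction_on_left' with
  | algebraMap r => simp [h.apply_algebraMap]
  | add x y i _ _ ihx ihy =>
    simp only [map_add, mul_add, Finset.sum_add_distrib, ihx, ihy, smul_add]
  | mem_mul _ hm i x _ ih =>
    obtain ⟨v, rfl⟩ := hm
    have hv : ∑ j, ⟪b j, v⟫ • ι ℝ (b j) = ι ℝ v := by
      conv_rhs => rw [← b.sum_repr' v, map_sum]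
      simp only [map_smul]
    calc ∑ j, ι ℝ (b j) * lc (b j) (ι ℝ v * x)
        = ∑ j, (⟪b j, v⟫ • ι ℝ (b j) * x + ι ℝ v * (ι ℝ (b j) * lc (b j) x)) := by
          refine Finset.sum_congr rfl fun j _ => ?_
          rw [h.apply_ι_mul, mul_sub, mul_smul_comm, smul_mul_assoc, ← mul_assoc (ι ℝ (b j)),
            ι_mul_ι_eq_neg, neg_mul, sub_neg_eq_add, mul_assoc]
      _ = ι ℝ v * x + ι ℝ v * ((i : ℝ) • x) := by
          rw [Finset.sum_add_distrib, ← Finset.sum_mul, hv, ← Finset.mul_sum, ih]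
      _ = ((i + 1 : ℕ) : ℝ) • (ι ℝ v * x) := by
          rw [mul_smul_comm, Nat.cast_succ, add_smul, one_smul, add_comm]

theorem exists_eq_list_prod_mul {l : List X} (hnorm : ∀ x ∈ l, ‖x‖ = 1)
    (hortho : l.Pairwise fun x y => ⟪x, y⟫ = 0) {M : ExteriorAlgebra ℝ X}
    (hM : ∀ x ∈ l, ι ℝ x * M = 0) : ∃ G, M = (l.map (ι ℝ)).prod * G := by
  induction l with
  | nil => exact ⟨M, by rw [List.map_nil, List.prod_nil, one_mul]⟩
  | cons a t ih =>
    rw [List.pairwise_cons] at hortho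
    obtain ⟨G, hG⟩ := ih (fun x hx => hnorm x (.tail _ hx)) hortho.2
      (fun x hx => hM x (.tail _ hx))
    refine ⟨(-1 : ℝ) ^ t.length • lc a G, ?_⟩
    calc M = ι ℝ a * lc a M :=
          (h.ι_mul_apply_of_ι_mul_eq_zero (hnorm a List.mem_cons_self)
            (hM a List.mem_cons_self)).symm
      _ = _ := by
          rw [hG, h.apply_mul, h.apply_list_prod_of_forall_inner_eq_zero a hortho.1, zero_mul,
            zero_add, h.ginv_apply_of_mem_exteriorPower (list_prod_map_ι_mem_exteriorPower t),
            List.map_cons, List.prod_cons]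
          simp only [smul_mul_assoc, mul_smul_comm, mul_assoc]

theorem exists_orthonormal_list_length_eq [FiniteDimensional ℝ X] {W : Submodule ℝ X}
    {p : ℕ} {H : ExteriorAlgebra ℝ X} (hH : H ∈ ⋀[ℝ]^p X) (hne : H ≠ 0)
    (hW : ∀ w ∈ W, ι ℝ w * H = 0) (hWperp : ∀ u ∈ Wᗮ, lc u H = 0) :
    ∃ l : List X, l.length = p ∧ (∀ x ∈ l, x ∈ W ∧ ‖x‖ = 1) ∧
      l.Pairwise fun x y => ⟪x, y⟫ = 0 := by
  classical
  obtain ⟨u, b, hb, hu⟩ := exists_orthonormalBasis_forall_mem_or_mem_orthogonal W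
  have hon : Orthonormal ℝ ((↑) : u → X) := hb ▸ b.orthonormal
  have hterm : ∀ x ∈ u, ι ℝ x * lc x H = if x ∈ W then H else 0 := by
    intro x hx
    split_ifs with hxW
    · exact h.ι_mul_apply_of_ι_mul_eq_zero (hon.1 ⟨x, hx⟩) (hW x hxW)
    · rw [hWperp x ((hu x hx).resolve_left hxW), mul_zero]
  have hcard : (u.filter (· ∈ W)).card = p := by
    have := h.sum_ι_mul_apply b hH
    rw [hb, Finset.sum_coe_sort u (fun x => ι ℝ x * lc x H), Finset.sum_congr rfl hterm,
      ← Finset.sum_filter, Finset.sum_const, ← Nat.cast_smul_eq_nsmul ℝ] at this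
    exact_mod_cast smul_left_injective ℝ hne this
  refine ⟨(u.filter (· ∈ W)).toList, by rw [Finset.length_toList, hcard], fun x hx => ?_, ?_⟩
  · rw [Finset.mem_toList, Finset.mem_filter] at hx
    exact ⟨hx.2, hon.1 ⟨x, hx.1⟩⟩
  · refine (Finset.nodup_toList _).pairwise_of_forall_ne fun x hx y hy hxy => ?_
    rw [Finset.mem_toList, Finset.mem_filter] at hx hy
    exact hon.2 (show (⟨x, hx.1⟩ : u) ≠ ⟨y, hy.1⟩ by simpa using hxy)

theorem exists_eq_expBlade [FiniteDimensional ℝ X] {W : Submodule ℝ X} {p : ℕ} (hp : 1 ≤ p)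
    {H : ExteriorAlgebra ℝ X} (hH : H ∈ ⋀[ℝ]^p X) (hne : H ≠ 0)
    (hW : ∀ w ∈ W, ι ℝ w * H = 0) (hWperp : ∀ u ∈ Wᗮ, lc u H = 0) :
    ∃ v : Fin p → X, H = expBlade v := by
  obtain ⟨l, rfl, hlW, hortho⟩ := h.exists_orthonormal_list_length_eq hH hne hW hWperp
  obtain ⟨G, hG⟩ := h.exists_eq_list_prod_mul (fun x hx => (hlW x hx).2) hortho
    fun x hx => hW x (hlW x hx).1
  obtain ⟨r, hr⟩ := exists_eq_smul_of_eq_mul (list_prod_map_ι_mem_exteriorPower l) hH hG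
  obtain ⟨v, hv⟩ := exists_expBlade_eq_smul_list_prod r (List.ne_nil_of_length_pos hp)
  exact ⟨v, hr.trans hv.symm⟩

end IsVectorContraction

namespace IsContractionExtension

variable {lc : X → ExteriorAlgebra ℝ X →ₗ[ℝ] ExteriorAlgebra ℝ X}
  {LC : ExteriorAlgebra ℝ X →ₗ[ℝ] ExteriorAlgebra ℝ X →ₗ[ℝ] ExteriorAlgebra ℝ X}
  (hLC : IsContractionExtension lc LC)
include hLC

theorem algebraMap_left (r : ℝ) (N : ExteriorAlgebra ℝ X) : LC (algebraMap ℝ _ r) N = r • N := by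
  rw [Algebra.algebraMap_eq_smul_one, map_smul, LinearMap.smul_apply, hLC.one_left]

theorem mul_left (M N P : ExteriorAlgebra ℝ X) : LC (M * N) P = LC N (LC M P) := by
  induction M using ExteriorAlgebra.induction generalizing N P with
  | algebraMap r =>
    rw [← Algebra.smul_def, map_smul, LinearMap.smul_apply, hLC.algebraMap_left, map_smul]
  | ι v => rw [hLC.ι_mul_left, hLC.ι_left]
  | mul a b iha ihb => rw [mul_assoc, iha, ihb, ← iha]
  | add a b iha ihb => simp only [add_mul, map_add, LinearMap.add_apply, iha, ihb]

theorem apply_lc_of_mem_exteriorPower (z : X) {k : ℕ} {F : ExteriorAlgebra ℝ X}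
    (hF : F ∈ ⋀[ℝ]^k X) (N : ExteriorAlgebra ℝ X) :
    LC F (lc z N) = (-1 : ℝ) ^ k • lc z (LC F N) := by
  rw [← hLC.ι_mul_left, ι_mul_eq_neg_one_pow_smul_mul z hF, map_smul, LinearMap.smul_apply,
    hLC.mul_left, hLC.ι_left]

variable {ginv : ExteriorAlgebra ℝ X →ₐ[ℝ] ExteriorAlgebra ℝ X} (h : IsVectorContraction ginv lc)
include h

theorem apply_mem_exteriorPower {k : ℕ} {F : ExteriorAlgebra ℝ X} (hF : F ∈ ⋀[ℝ]^k X)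
    {m : ℕ} {N : ExteriorAlgebra ℝ X} (hN : N ∈ ⋀[ℝ]^m X) : LC F N ∈ ⋀[ℝ]^(m - k) X := by
  induction hF using Submodule.pow_induction_on_left' generalizing m N with
  | algebraMap r => simpa [hLC.algebraMap_left] using Submodule.smul_mem _ r hN
  | add x y i _ _ ihx ihy =>
    rw [map_add, LinearMap.add_apply]
    exact add_mem (ihx hN) (ihy hN)
  | mem_mul _ hv i x _ ih =>
    obtain ⟨v, rfl⟩ := hv
    rw [hLC.ι_mul_left]
    simpa only [Nat.sub_sub, add_comm 1] using ih (h.apply_mem_exteriorPower v hN)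

theorem exists_apply_eq_ι {p : ℕ} (hp : 1 ≤ p) {F H : ExteriorAlgebra ℝ X}
    (hF : F ∈ ⋀[ℝ]^(p - 1) X) (hH : H ∈ ⋀[ℝ]^p X) : ∃ w : X, LC F H = ι ℝ w :=
  exists_eq_ι_of_mem_exteriorPower_one <| by
    simpa [Nat.sub_sub_self hp] using hLC.apply_mem_exteriorPower h hF hH

theorem apply_lc_eq_zero_iff {k : ℕ} {F N : ExteriorAlgebra ℝ X} (hF : F ∈ ⋀[ℝ]^k X) {w : X}
    (hw : LC F N = ι ℝ w) (u : X) : LC F (lc u N) = 0 ↔ ⟪u, w⟫ = 0 := by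
  rw [hLC.apply_lc_of_mem_exteriorPower u hF, hw, h.apply_ι, smul_eq_zero,
    algebraMap_eq_zero_iff]
  simp

theorem eq_zero_of_forall_apply_eq_zero [FiniteDimensional ℝ X] {q : ℕ}
    {N : ExteriorAlgebra ℝ X} (hN : N ∈ ⋀[ℝ]^q X) (hF : ∀ F ∈ ⋀[ℝ]^q X, LC F N = 0) :
    N = 0 := by
  induction q generalizing N with
  | zero => simpa [hLC.one_left] using hF 1 (SetLike.one_mem_graded _)
  | succ q ih =>
    have hv (v : X) : lc v N = 0 :=
      ih (by simpa using h.apply_mem_exteriorPower v hN) fun F hF' => by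
        rw [← hLC.ι_mul_left]
        exact hF _ (ι_mul_mem_exteriorPower v hF')
    have := h.sum_ι_mul_apply (stdOrthonormalBasis ℝ X) hN
    simp only [hv, mul_zero, Finset.sum_const_zero] at this
    exact (smul_eq_zero.mp this.symm).resolve_left (Nat.cast_ne_zero.mpr q.succ_ne_zero)

theorem apply_expBlade_mul_expBlade {p : ℕ} (hp : 1 ≤ p) (v : Fin p → X)
    {F : ExteriorAlgebra ℝ X} (hF : F ∈ ⋀[ℝ]^(p - 1) X) :
    LC F (expBlade v) * expBlade v = 0 := by
  obtain ⟨u, hu⟩ := hLC.exists_apply_eq_ι h hp hF (expBlade_mem_exteriorPower v)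
  let Y := Submodule.span ℝ (Set.range v)
  have : FiniteDimensional ℝ Y := FiniteDimensional.span_of_finite ℝ (Set.finite_range v)
  have huY : u ∈ Y := by
    rw [← Y.orthogonal_orthogonal]
    intro z hz
    refine (hLC.apply_lc_eq_zero_iff h hF hu z).mp ?_
    rw [expBlade_eq_prod_map_ofFn, h.apply_list_prod_of_forall_inner_eq_zero, map_zero]
    intro w hw
    exact Submodule.inner_left_of_mem_orthogonal
      (Submodule.subset_span (List.mem_ofFn.mp hw)) hz
  rw [hu]
  exact ι_mul_expBlade_of_mem_span v huY

end IsContractionExtension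

end Contraction

/-- a homogeneous `p`-vector `H` (`p ≥ 1`) is a blade iff `(F⌟H)∧H = 0` for
every `(p−1)`-vector `F`. -/
theorem stmt18 {X : Type*} [NormedAddCommGroup X] [InnerProductSpace ℝ X]
    [FiniteDimensional ℝ X]
    -- the grade involution: the unique algebra automorphism with `v̂ = -v` on vectors
    (ginv : ExteriorAlgebra ℝ X →ₐ[ℝ] ExteriorAlgebra ℝ X)
    (hginv : ∀ v : X, ginv (ExteriorAlgebra.ι ℝ v) = - ExteriorAlgebra.ι ℝ v)
    -- the left contraction by a vector, characterized by its defining properties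
    (lc : X → ExteriorAlgebra ℝ X →ₗ[ℝ] ExteriorAlgebra ℝ X)
    (hlc_one : ∀ v : X, lc v 1 = 0)
    (hlc_vec : ∀ v w : X, lc v (ExteriorAlgebra.ι ℝ w) = algebraMap ℝ (ExteriorAlgebra ℝ X) ⟪v, w⟫)
    (hlc_mul : ∀ (v : X) (M N : ExteriorAlgebra ℝ X),
      lc v (M * N) = lc v M * N + ginv M * lc v N)
    -- the left contraction `LC M N = M ⌟ N`, extended (bi)linearly in the contractor `M`
    (LC : ExteriorAlgebra ℝ X →ₗ[ℝ] ExteriorAlgebra ℝ X →ₗ[ℝ] ExteriorAlgebra ℝ X)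
    (hLC_one : ∀ N : ExteriorAlgebra ℝ X, LC 1 N = N)
    (hLC_vec : ∀ (v : X) (N : ExteriorAlgebra ℝ X), LC (ExteriorAlgebra.ι ℝ v) N = lc v N)
    (hLC_mul : ∀ (v : X) (M N : ExteriorAlgebra ℝ X),
      LC (ExteriorAlgebra.ι ℝ v * M) N = LC M (lc v N))
    {p : ℕ} (hp : 1 ≤ p) (H : ExteriorAlgebra ℝ X) (hH : H ∈ ⋀[ℝ]^p X) :
    (H = 0 ∨ ∃ v : Fin p → X, H = expBlade v) ↔
      ∀ F ∈ ⋀[ℝ]^(p - 1) X, LC F H * H = 0 := by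
  have h : IsVectorContraction ginv lc := ⟨hginv, hlc_one, hlc_vec, hlc_mul⟩
  have hLC : IsContractionExtension lc LC := ⟨hLC_one, hLC_vec, hLC_mul⟩
  refine ⟨?_, fun hH2 => or_iff_not_imp_left.mpr fun hne => ?_⟩
  · rintro (rfl | ⟨v, rfl⟩) F hF
    · rw [map_zero, zero_mul]
    · exact hLC.apply_expBlade_mul_expBlade h hp v hF
  let W := Submodule.span ℝ {w : X | ∃ F ∈ ⋀[ℝ]^(p - 1) X, LC F H = ι ℝ w}
  refine h.exists_eq_expBlade (W := W) hp hH hne (fun w hw => ?_) fun u hu => ?_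
  · suffices W ≤ LinearMap.ker (LinearMap.mulRight ℝ H ∘ₗ ι ℝ) from this hw
    rw [Submodule.span_le]
    rintro _ ⟨F, hF, hFw⟩
    simpa [← hFw] using hH2 F hF
  · refine hLC.eq_zero_of_forall_apply_eq_zero h (h.apply_mem_exteriorPower u hH) fun F hF => ?_
    obtain ⟨w, hw⟩ := hLC.exists_apply_eq_ι h hp hF hH
    refine (hLC.apply_lc_eq_zero_iff h hF hw u).mpr ?_
    exact Submodule.inner_left_of_mem_orthogonal (Submodule.subset_span ⟨F, hF, hw⟩ : w ∈ W) hu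
end
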